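/- arXiv:1002.4473 — 8 statements merged into one kernel-verified Lean document; each statement's English description precedes it below -/
import Mathlib

section
/- Let λ > 0 and b > 0. Then, as the integer M → ∞, ∫₀^∞ (1/(x+b)) · M(1−e^{−λx})^{M−1} λ e^{−λx} dx is asymptotically equivalent to λ/(λb + ln M), i.e. the ratio of the two quantities tends to 1; consequently it is also asymptotically equivalent to λ/ln M. (This is the expectation E[1/(g_max + b)] where g_max is the maximum of M i.i.d. exponential random variables with rate λ.) -/
/-!
The maximum `g_max` of `M` exponentials of rate `λ` has distribution function
`F(x) = (1 - e^{-λx})^M`, which rises from `≈ 0` to `≈ 1` in a window of width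
`O(log log M)/λ` around `log M / λ`. Since `1/(x + b)` is decreasing,
`F(s)/(s + b) ≤ E[1/(g_max + b)] ≤ F(t)/b + 1/(t + b)` for all `s, t ≥ 0`. With
`s, t = (log M ± log log M)/λ` one gets `F(s) ≥ 1 - 1/log M` (Bernoulli) and `F(t) ≤ 1/M`,
and both bounds are `λ/(λb + log M) · (1 + o(1))`.
-/

open MeasureTheory Filter Real Set Topology

noncomputable def maxExpCDF (lam : ℝ) (M : ℕ) (x : ℝ) : ℝ := (1 - exp (-lam * x)) ^ M

noncomputable def maxExpDensity (lam : ℝ) (M : ℕ) (x : ℝ) : ℝ :=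
  M * (1 - exp (-lam * x)) ^ (M - 1) * (lam * exp (-lam * x))

section MaxExp

variable {lam : ℝ} {M : ℕ}

theorem hasDerivAt_maxExpCDF (lam : ℝ) (M : ℕ) (x : ℝ) :
    HasDerivAt (maxExpCDF lam M) (maxExpDensity lam M x) x := by
  have h := ((((hasDerivAt_id' x).const_mul (-lam)).exp).const_sub 1).fun_pow M
  exact h.congr_deriv (by unfold maxExpDensity; ring)

theorem continuous_maxExpDensity (lam : ℝ) (M : ℕ) : Continuous (maxExpDensity lam M) := by
  unfold maxExpDensity
  fun_prop

theorem maxExpCDF_zero (hM : M ≠ 0) : maxExpCDF lam M 0 = 0 := by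
  simp [maxExpCDF, hM]

theorem tendsto_maxExpCDF_atTop (hlam : 0 < lam) (M : ℕ) :
    Tendsto (maxExpCDF lam M) atTop (𝓝 1) := by
  have h : Tendsto (fun x => exp (-lam * x)) atTop (𝓝 0) :=
    tendsto_exp_atBot.comp (tendsto_id.const_mul_atTop_of_neg (neg_lt_zero.mpr hlam))
  have hpow := (h.const_sub 1).pow M
  rwa [sub_zero, one_pow] at hpow

theorem exp_neg_mul_le_one (hlam : 0 ≤ lam) {x : ℝ} (hx : 0 ≤ x) : exp (-lam * x) ≤ 1 :=
  exp_le_one_iff.mpr (by nlinarith)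

theorem maxExpCDF_nonneg (hlam : 0 ≤ lam) (M : ℕ) {x : ℝ} (hx : 0 ≤ x) :
    0 ≤ maxExpCDF lam M x :=
  pow_nonneg (sub_nonneg.mpr (exp_neg_mul_le_one hlam hx)) M

theorem maxExpDensity_nonneg (hlam : 0 ≤ lam) (M : ℕ) {x : ℝ} (hx : 0 ≤ x) :
    0 ≤ maxExpDensity lam M x := by
  have := sub_nonneg.mpr (exp_neg_mul_le_one hlam hx)
  unfold maxExpDensity
  positivity

theorem maxExpDensity_le (hlam : 0 ≤ lam) (M : ℕ) {x : ℝ} (hx : 0 ≤ x) :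
    maxExpDensity lam M x ≤ M * lam * exp (-lam * x) := by
  have h0 := sub_nonneg.mpr (exp_neg_mul_le_one hlam hx)
  have h1 : (1 - exp (-lam * x)) ^ (M - 1) ≤ 1 :=
    pow_le_one₀ h0 (by linarith [exp_pos (-lam * x)])
  calc maxExpDensity lam M x = (1 - exp (-lam * x)) ^ (M - 1) * (M * lam * exp (-lam * x)) := by
        unfold maxExpDensity; ring
    _ ≤ 1 * (M * lam * exp (-lam * x)) := by gcongr
    _ = M * lam * exp (-lam * x) := one_mul _

theorem integrableOn_maxExpDensity (hlam : 0 < lam) (M : ℕ) {a : ℝ} (ha : 0 ≤ a) :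
    IntegrableOn (maxExpDensity lam M) (Ioi a) := by
  refine ((exp_neg_integrableOn_Ioi a hlam).const_mul (M * lam)).mono'
    (continuous_maxExpDensity lam M).aestronglyMeasurable ?_
  filter_upwards [ae_restrict_mem measurableSet_Ioi] with x (hx : a < x)
  have hx0 : 0 ≤ x := ha.trans hx.le
  rw [norm_of_nonneg (maxExpDensity_nonneg hlam.le M hx0)]
  exact maxExpDensity_le hlam.le M hx0

theorem integral_Ioc_maxExpDensity (lam : ℝ) (M : ℕ) {a c : ℝ} (hac : a ≤ c) :
    ∫ x in Ioc a c, maxExpDensity lam M x = maxExpCDF lam M c - maxExpCDF lam M a := by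
  rw [← intervalIntegral.integral_of_le hac]
  exact intervalIntegral.integral_eq_sub_of_hasDerivAt (fun x _ => hasDerivAt_maxExpCDF lam M x)
    ((continuous_maxExpDensity lam M).intervalIntegrable a c)

theorem integral_Ioi_maxExpDensity (hlam : 0 < lam) (M : ℕ) {a : ℝ} (ha : 0 ≤ a) :
    ∫ x in Ioi a, maxExpDensity lam M x = 1 - maxExpCDF lam M a :=
  integral_Ioi_of_hasDerivAt_of_tendsto' (fun x _ => hasDerivAt_maxExpCDF lam M x)
    (integrableOn_maxExpDensity hlam M ha) (tendsto_maxExpCDF_atTop hlam M)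

end MaxExp

section AntitoneWeight

variable {f p : ℝ → ℝ}

theorem mul_setIntegral_Ioc_le_setIntegral_Ioi_mul
    (hfp : IntegrableOn (fun x => f x * p x) (Ioi 0)) (hp : IntegrableOn p (Ioi 0))
    (hf : AntitoneOn f (Ici 0)) (hf0 : ∀ x ∈ Ioi 0, 0 ≤ f x) (hp0 : ∀ x ∈ Ioi 0, 0 ≤ p x)
    {s : ℝ} (hs : 0 ≤ s) :
    f s * ∫ x in Ioc 0 s, p x ≤ ∫ x in Ioi 0, f x * p x := by
  have hsub : Ioc (0 : ℝ) s ⊆ Ioi 0 := Ioc_subset_Ioi_self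
  calc f s * ∫ x in Ioc 0 s, p x = ∫ x in Ioc 0 s, f s * p x := (integral_const_mul _ _).symm
    _ ≤ ∫ x in Ioc 0 s, f x * p x :=
        setIntegral_mono_on ((hp.mono_set hsub).const_mul _) (hfp.mono_set hsub)
          measurableSet_Ioc fun x hx => mul_le_mul_of_nonneg_right
            (hf (mem_Ici.mpr hx.1.le) (mem_Ici.mpr hs) hx.2) (hp0 x hx.1)
    _ ≤ ∫ x in Ioi 0, f x * p x :=
        setIntegral_mono_set hfp
          (ae_restrict_of_forall_mem measurableSet_Ioi fun x hx =>
            mul_nonneg (hf0 x hx) (hp0 x hx))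
          hsub.eventuallyLE

theorem setIntegral_Ioi_mul_le (hfp : IntegrableOn (fun x => f x * p x) (Ioi 0))
    (hp : IntegrableOn p (Ioi 0)) (hf : AntitoneOn f (Ici 0)) (hp0 : ∀ x ∈ Ioi 0, 0 ≤ p x)
    {t : ℝ} (ht : 0 ≤ t) :
    ∫ x in Ioi 0, f x * p x ≤ f 0 * (∫ x in Ioc 0 t, p x) + f t * ∫ x in Ioi t, p x := by
  have hIoc : Ioc (0 : ℝ) t ⊆ Ioi 0 := Ioc_subset_Ioi_self
  have hIoi : Ioi t ⊆ Ioi 0 := Ioi_subset_Ioi ht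
  have hhead : ∫ x in Ioc 0 t, f x * p x ≤ ∫ x in Ioc 0 t, f 0 * p x :=
    setIntegral_mono_on (hfp.mono_set hIoc) ((hp.mono_set hIoc).const_mul _) measurableSet_Ioc
      fun x hx => mul_le_mul_of_nonneg_right (hf self_mem_Ici (mem_Ici.mpr hx.1.le) hx.1.le)
        (hp0 x hx.1)
  have htail : ∫ x in Ioi t, f x * p x ≤ ∫ x in Ioi t, f t * p x :=
    setIntegral_mono_on (hfp.mono_set hIoi) ((hp.mono_set hIoi).const_mul _) measurableSet_Ioi
      fun x hx => mul_le_mul_of_nonneg_right (hf (mem_Ici.mpr ht) (mem_Ici.mpr (ht.trans hx.le))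
        (le_of_lt hx)) (hp0 x (hIoi hx))
  rw [← Ioc_union_Ioi_eq_Ioi ht, setIntegral_union Ioc_disjoint_Ioi_same measurableSet_Ioi
    (hfp.mono_set hIoc) (hfp.mono_set hIoi), ← integral_const_mul, ← integral_const_mul]
  exact add_le_add hhead htail

end AntitoneWeight

noncomputable def expectedInvShiftedMax (lam b : ℝ) (M : ℕ) : ℝ :=
  ∫ x in Ioi 0, 1 / (x + b) * maxExpDensity lam M x

section ShiftedInverse

variable {lam b : ℝ} {M : ℕ}

theorem antitoneOn_one_div_add (hb : 0 < b) : AntitoneOn (fun x : ℝ => 1 / (x + b)) (Ici 0) :=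
  fun x hx _ _ hxy => one_div_le_one_div_of_le (by linarith [mem_Ici.mp hx]) (by linarith)

theorem integrableOn_one_div_add_mul_maxExpDensity (hlam : 0 < lam) (hb : 0 < b) (M : ℕ) :
    IntegrableOn (fun x => 1 / (x + b) * maxExpDensity lam M x) (Ioi 0) := by
  refine (integrableOn_maxExpDensity hlam M le_rfl).bdd_mul (c := 1 / b)
    ((continuousOn_const.div (by fun_prop) fun x hx => ?_).aestronglyMeasurable measurableSet_Ioi)
    (ae_restrict_of_forall_mem measurableSet_Ioi fun x hx => ?_)
  · exact (by linarith [mem_Ioi.mp hx] : x + b ≠ 0)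
  · have hx : 0 < x := hx
    rw [norm_of_nonneg (by positivity)]
    exact one_div_le_one_div_of_le hb (by linarith)

theorem maxExpCDF_div_add_le_expectedInvShiftedMax (hlam : 0 < lam) (hb : 0 < b) (hM : M ≠ 0)
    {s : ℝ} (hs : 0 ≤ s) :
    maxExpCDF lam M s / (s + b) ≤ expectedInvShiftedMax lam b M := by
  have h := mul_setIntegral_Ioc_le_setIntegral_Ioi_mul
    (integrableOn_one_div_add_mul_maxExpDensity hlam hb M)
    (integrableOn_maxExpDensity hlam M le_rfl)
    (antitoneOn_one_div_add hb) (fun x hx => by have : 0 < x := hx; positivity)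
    (fun x hx => maxExpDensity_nonneg hlam.le M (le_of_lt hx)) hs
  rwa [integral_Ioc_maxExpDensity lam M hs, maxExpCDF_zero hM, sub_zero, one_div_mul_eq_div] at h

theorem expectedInvShiftedMax_le (hlam : 0 < lam) (hb : 0 < b) (hM : M ≠ 0) {t : ℝ}
    (ht : 0 ≤ t) :
    expectedInvShiftedMax lam b M ≤ maxExpCDF lam M t / b + 1 / (t + b) := by
  have h := setIntegral_Ioi_mul_le
    (integrableOn_one_div_add_mul_maxExpDensity hlam hb M)
    (integrableOn_maxExpDensity hlam M le_rfl)
    (antitoneOn_one_div_add hb) (fun x hx => maxExpDensity_nonneg hlam.le M (le_of_lt hx)) ht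
  rw [integral_Ioc_maxExpDensity lam M ht, integral_Ioi_maxExpDensity hlam M ht,
    maxExpCDF_zero hM, sub_zero, zero_add] at h
  have hF := maxExpCDF_nonneg hlam.le M ht
  have htb : 0 < 1 / (t + b) := by positivity
  calc _ ≤ 1 / b * maxExpCDF lam M t + 1 / (t + b) * (1 - maxExpCDF lam M t) := h
    _ ≤ maxExpCDF lam M t / b + 1 / (t + b) := by rw [one_div_mul_eq_div]; nlinarith

end ShiftedInverse

theorem tendsto_log_natCast_atTop : Tendsto (fun M : ℕ => log M) atTop atTop :=
  tendsto_log_atTop.comp tendsto_natCast_atTop_atTop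

theorem tendsto_div_const_add_atTop (c : ℝ) :
    Tendsto (fun L : ℝ => L / (c + L)) atTop (𝓝 1) := by
  have h := ((tendsto_atTop_add_const_left atTop c tendsto_id).const_div_atTop c).const_sub 1
  rw [sub_zero] at h
  refine h.congr' ?_
  filter_upwards [eventually_gt_atTop (-c)] with L hL
  have : c + L ≠ 0 := by linarith
  simp only [id]
  field_simp
  ring

theorem tendsto_log_div_const_add_atTop (c : ℝ) :
    Tendsto (fun L : ℝ => log L / (c + L)) atTop (𝓝 0) := by
  have h := isLittleO_log_id_atTop.tendsto_div_nhds_zero.mul (tendsto_div_const_add_atTop c)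
  rw [zero_mul] at h
  refine h.congr' ?_
  filter_upwards [eventually_ne_atTop 0] with L hL
  simp only [id]
  field_simp

theorem tendsto_const_add_div_const_add_add_mul_log_atTop (c k : ℝ) :
    Tendsto (fun L : ℝ => (c + L) / (c + L + k * log L)) atTop (𝓝 1) := by
  have h := (((tendsto_log_div_const_add_atTop c).const_mul k).const_add 1).inv₀ (by simp)
  rw [mul_zero, add_zero, inv_one] at h
  refine h.congr' ?_
  filter_upwards [eventually_gt_atTop (-c)] with L hL
  have : c + L ≠ 0 := by linarith
  field_simp

theorem tendsto_one_sub_inv_mul_div_add_log_atTop (c : ℝ) :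
    Tendsto (fun L : ℝ => (1 - 1 / L) * ((c + L) / (c + L + log L))) atTop (𝓝 1) := by
  have h := ((tendsto_id.const_div_atTop (1 : ℝ)).const_sub 1).mul
    (tendsto_const_add_div_const_add_add_mul_log_atTop c 1)
  simpa using h

theorem tendsto_mul_exp_neg_div_add_div_sub_log_atTop (c : ℝ) :
    Tendsto (fun L : ℝ => (c + L) * exp (-L) / c + (c + L) / (c + L - log L)) atTop (𝓝 1) := by
  have hexp : Tendsto (fun L : ℝ => (c + L) * exp (-L)) atTop (𝓝 0) := by
    have h := (tendsto_exp_neg_atTop_nhds_zero.const_mul c).add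
      (by simpa using tendsto_pow_mul_exp_neg_atTop_nhds_zero 1)
    rw [mul_zero, add_zero] at h
    exact h.congr fun L => by ring
  have h := (hexp.div_const c).add
    (by simpa [← sub_eq_add_neg] using tendsto_const_add_div_const_add_add_mul_log_atTop c (-1))
  simpa using h

section Quantiles

variable {lam : ℝ} {M : ℕ}

theorem one_lt_natCast_of_one_le_log (hL : 1 ≤ log M) : (1 : ℝ) < M :=
  (log_pos_iff (Nat.cast_nonneg M)).mp (by linarith)

theorem ne_zero_of_one_le_log (hL : 1 ≤ log M) : M ≠ 0 := by
  rintro rfl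
  norm_num at hL

theorem one_sub_one_div_log_le_maxExpCDF (hlam : lam ≠ 0) (hL : 1 ≤ log M) :
    1 - 1 / log M ≤ maxExpCDF lam M ((log M + log (log M)) / lam) := by
  have hM := one_lt_natCast_of_one_le_log hL
  have hexp : exp (-lam * ((log M + log (log M)) / lam)) = 1 / (M * log M) := by
    rw [show -lam * ((log M + log (log M)) / lam) = -(log M + log (log M)) by field_simp,
      exp_neg, exp_add, exp_log (by linarith), exp_log (by linarith), one_div]
  have hsmall : -2 ≤ -(1 / (M * log M)) := by
    have : 1 / (M * log M) ≤ 1 := by rw [div_le_one (by positivity)]; nlinarith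
    linarith
  calc 1 - 1 / log M = 1 + M * -(1 / (M * log M)) := by field_simp; ring
    _ ≤ (1 + -(1 / (M * log M))) ^ M := one_add_mul_le_pow hsmall M
    _ = maxExpCDF lam M ((log M + log (log M)) / lam) := by rw [maxExpCDF, hexp, ← sub_eq_add_neg]

theorem maxExpCDF_le_exp_neg_log (hlam : lam ≠ 0) (hL : 1 ≤ log M) :
    maxExpCDF lam M ((log M - log (log M)) / lam) ≤ exp (-log M) := by
  have hM := one_lt_natCast_of_one_le_log hL
  have hexp : exp (-lam * ((log M - log (log M)) / lam)) = log M / M := by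
    rw [show -lam * ((log M - log (log M)) / lam) = log (log M) - log M by field_simp; ring,
      exp_sub, exp_log (by linarith), exp_log (by linarith)]
  rw [maxExpCDF, hexp]
  exact one_sub_div_pow_le_exp_neg (log_le_self (Nat.cast_nonneg M))

end Quantiles

section Squeeze

variable {lam b : ℝ} {M : ℕ}

theorem le_expectedInvShiftedMax_div (hlam : 0 < lam) (hb : 0 < b) (hL : 1 ≤ log M) :
    (1 - 1 / log M) * ((lam * b + log M) / (lam * b + log M + log (log M))) ≤
      expectedInvShiftedMax lam b M / (lam / (lam * b + log M)) := by
  set L := log M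
  have hlogL : 0 ≤ log L := log_nonneg hL
  set s := (L + log L) / lam
  have hs : lam * (s + b) = lam * b + L + log L := by simp only [s]; field_simp; ring
  have hsb : 0 < s + b := by positivity
  have hM : M ≠ 0 := ne_zero_of_one_le_log hL
  calc (1 - 1 / L) * ((lam * b + L) / (lam * b + L + log L))
      = (1 - 1 / L) / (s + b) * ((lam * b + L) / lam) := by rw [← hs]; field_simp
    _ ≤ maxExpCDF lam M s / (s + b) * ((lam * b + L) / lam) := by
        gcongr; exact one_sub_one_div_log_le_maxExpCDF hlam.ne' hL
    _ ≤ expectedInvShiftedMax lam b M * ((lam * b + L) / lam) := by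
        gcongr; exact maxExpCDF_div_add_le_expectedInvShiftedMax hlam hb hM (by positivity)
    _ = expectedInvShiftedMax lam b M / (lam / (lam * b + L)) := by
        rw [div_div_eq_mul_div, mul_div_assoc]

theorem expectedInvShiftedMax_div_le (hlam : 0 < lam) (hb : 0 < b) (hL : 1 ≤ log M) :
    expectedInvShiftedMax lam b M / (lam / (lam * b + log M)) ≤
      (lam * b + log M) * exp (-log M) / (lam * b) +
        (lam * b + log M) / (lam * b + log M - log (log M)) := by
  set L := log M
  have hlogL : log L < L := (log_le_sub_one_of_pos (by linarith)).trans_lt (by linarith)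
  set t := (L - log L) / lam
  have ht : lam * (t + b) = lam * b + L - log L := by simp only [t]; field_simp; ring
  have ht0 : 0 ≤ t := div_nonneg (by linarith) hlam.le
  have hM : M ≠ 0 := ne_zero_of_one_le_log hL
  calc expectedInvShiftedMax lam b M / (lam / (lam * b + L))
      = expectedInvShiftedMax lam b M * ((lam * b + L) / lam) := by
        rw [div_div_eq_mul_div, mul_div_assoc]
    _ ≤ (maxExpCDF lam M t / b + 1 / (t + b)) * ((lam * b + L) / lam) := by
        gcongr; exact expectedInvShiftedMax_le hlam hb hM ht0
    _ ≤ (exp (-L) / b + 1 / (t + b)) * ((lam * b + L) / lam) := by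
        gcongr; exact maxExpCDF_le_exp_neg_log hlam.ne' hL
    _ = (lam * b + L) * exp (-L) / (lam * b) + (lam * b + L) / (lam * b + L - log L) := by
        rw [← ht]; field_simp

theorem tendsto_expectedInvShiftedMax_div (hlam : 0 < lam) (hb : 0 < b) :
    Tendsto (fun M : ℕ => expectedInvShiftedMax lam b M / (lam / (lam * b + log M)))
      atTop (𝓝 1) := by
  have hlog := tendsto_log_natCast_atTop
  have hL : ∀ᶠ M : ℕ in atTop, 1 ≤ log M := hlog.eventually_ge_atTop 1
  exact tendsto_of_tendsto_of_tendsto_of_le_of_le'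
    ((tendsto_one_sub_inv_mul_div_add_log_atTop (lam * b)).comp hlog)
    ((tendsto_mul_exp_neg_div_add_div_sub_log_atTop (lam * b)).comp hlog)
    (hL.mono fun M hM => le_expectedInvShiftedMax_div hlam hb hM)
    (hL.mono fun M hM => expectedInvShiftedMax_div_le hlam hb hM)

theorem tendsto_expectedInvShiftedMax_div_log (hlam : 0 < lam) (hb : 0 < b) :
    Tendsto (fun M : ℕ => expectedInvShiftedMax lam b M / (lam / log M)) atTop (𝓝 1) := by
  have hlog := tendsto_log_natCast_atTop
  have h := (tendsto_expectedInvShiftedMax_div hlam hb).mul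
    ((tendsto_div_const_add_atTop (lam * b)).comp hlog)
  rw [mul_one] at h
  refine h.congr' ?_
  filter_upwards [hlog.eventually_gt_atTop 0] with M hM
  have : lam * b + log M ≠ 0 := by positivity
  simp only [Function.comp_apply]
  field_simp

end Squeeze

/-- Lemma 1: For exponential(λ) channel gains, `E[1/(g_max + b)] ~ λ/(λb + ln M) ~ λ/ln M`
as the number of sensors `M → ∞`, where `g_max` is the maximum of `M` i.i.d.
exponential random variables with rate `λ`, whose density is
`p_M(x) = M (1 - e^{-λx})^{M-1} λ e^{-λx}`. -/
theorem diversity_gmax_asymptotics (lam b : ℝ) (hlam : 0 < lam) (hb : 0 < b) :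
    Tendsto (fun M : ℕ =>
        (∫ x in Set.Ioi (0:ℝ),
          (1 / (x + b)) * ((M : ℝ) * (1 - Real.exp (-lam * x)) ^ (M - 1)
            * (lam * Real.exp (-lam * x)))) /
        (lam / (lam * b + Real.log M))) atTop (nhds 1) ∧
    Tendsto (fun M : ℕ =>
        (∫ x in Set.Ioi (0:ℝ),
          (1 / (x + b)) * ((M : ℝ) * (1 - Real.exp (-lam * x)) ^ (M - 1)
            * (lam * Real.exp (-lam * x)))) /
        (lam / Real.log M)) atTop (nhds 1) :=
  ⟨tendsto_expectedInvShiftedMax_div hlam hb, tendsto_expectedInvShiftedMax_div_log hlam hb⟩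
end

section
/- Let λ > 0, b > 0 and let M be a positive integer. Then ∫₀^∞ (1/(x+b)) · M(1−e^{−λx})^{M−1} λ e^{−λx} dx = Σ_{k=0}^{M−1} M λ · C(M−1, k) · (−1)^k · exp(λ(k+1)b) · E₁(λ(k+1)b), where C(M−1,k) is the binomial coefficient and E₁ is the exponential integral. -/
/-!
Expanding `(1 - e^{-λx})^{M-1}` by the binomial theorem turns the integrand into a finite
combination of `e^{-λ(k+1)x}/(x+b)`. Each of these is a Laplace transform of `1/(x+b)`, and
the substitution `t = a(x+b)` turns `∫₀^∞ e^{-ax}/(x+b) dx` into `e^{ab} E₁(ab)`.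
-/

open MeasureTheory Real Set

theorem integral_comp_add_right_Ioi {E : Type*} [NormedAddCommGroup E] [NormedSpace ℝ E]
    (g : ℝ → E) (a c : ℝ) :
    ∫ x in Ioi a, g (x + c) = ∫ x in Ioi (a + c), g x := by
  rw [← integral_indicator measurableSet_Ioi, ← integral_indicator measurableSet_Ioi,
    ← integral_add_right_eq_self ((Ioi (a + c)).indicator g) c]
  congr 1
  ext x
  simp only [indicator_apply, mem_Ioi, add_lt_add_iff_right]

theorem integrableOn_exp_neg_mul_div_add_Ioi {a b : ℝ} (ha : 0 < a) (hb : 0 < b) :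
    IntegrableOn (fun x => exp (-a * x) / (x + b)) (Ioi 0) := by
  refine ((exp_neg_integrableOn_Ioi 0 ha).const_mul b⁻¹).mono' ?_ ?_
  · refine ContinuousOn.aestronglyMeasurable ?_ measurableSet_Ioi
    exact ContinuousOn.div (by fun_prop) (by fun_prop) fun x (hx : 0 < x) => by positivity
  · filter_upwards [ae_restrict_mem measurableSet_Ioi] with x (hx : 0 < x)
    rw [norm_div, norm_of_nonneg (exp_nonneg _), norm_of_nonneg (by positivity),
      div_eq_inv_mul]
    gcongr
    linarith

theorem integral_exp_neg_mul_div_add_Ioi {a b : ℝ} (ha : 0 < a) (hb : 0 < b) :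
    ∫ x in Ioi 0, exp (-a * x) / (x + b) = exp (a * b) * ∫ t in Ioi (a * b), exp (-t) / t := by
  set E₁ : ℝ → ℝ := fun t => exp (-t) / t
  have hsubst : ∀ x ∈ Ioi (0 : ℝ),
      exp (-a * x) / (x + b) = a * exp (a * b) * E₁ (a * (x + b)) := by
    intro x (hx : 0 < x)
    have hxb : x + b ≠ 0 := by positivity
    simp only [E₁]
    rw [mul_add, neg_add, exp_add, ← neg_mul]
    field_simp
    rw [← exp_add, add_neg_cancel, exp_zero]
  calc ∫ x in Ioi 0, exp (-a * x) / (x + b)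
      = a * exp (a * b) * ∫ x in Ioi 0, E₁ (a * (x + b)) := by
        rw [setIntegral_congr_fun measurableSet_Ioi hsubst, integral_const_mul]
    _ = a * exp (a * b) * ∫ y in Ioi b, E₁ (a * y) := by
        rw [integral_comp_add_right_Ioi (fun y => E₁ (a * y)), zero_add]
    _ = exp (a * b) * ∫ t in Ioi (a * b), E₁ t := by
        rw [integral_comp_mul_left_Ioi _ _ ha, smul_eq_mul]
        field_simp

theorem natCast_mul_one_sub_pow_pred_mul {R : Type*} [CommRing R] (M : ℕ) (y : R) :
    M * (1 - y) ^ (M - 1) * y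
      = ∑ k ∈ Finset.range M, M * ((M - 1).choose k : R) * (-1) ^ k * y ^ (k + 1) := by
  cases M with
  | zero => simp
  | succ n =>
    rw [Nat.add_sub_cancel, sub_eq_neg_add, add_pow, Finset.mul_sum, Finset.sum_mul]
    refine Finset.sum_congr rfl fun k _ => ?_
    rw [neg_pow, one_pow]
    ring

theorem diversity_expectation_exact_general (lam b : ℝ) (hlam : 0 < lam) (hb : 0 < b)
    (M : ℕ) :
    (∫ x in Set.Ioi (0:ℝ),
        (1 / (x + b)) * ((M : ℝ) * (1 - Real.exp (-lam * x)) ^ (M - 1)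
          * (lam * Real.exp (-lam * x))))
    = ∑ k ∈ Finset.range M,
        (M : ℝ) * lam * (Nat.choose (M - 1) k : ℝ) * (-1 : ℝ) ^ k
          * Real.exp (lam * (k + 1) * b)
          * (∫ t in Set.Ioi (lam * (k + 1) * b), Real.exp (-t) / t) := by
  have hrate : ∀ k : ℕ, 0 < lam * (k + 1) := fun k => by positivity
  have hexpand : ∀ x : ℝ,
      (1 / (x + b)) * (M * (1 - exp (-lam * x)) ^ (M - 1) * (lam * exp (-lam * x)))
        = ∑ k ∈ Finset.range M, M * lam * ((M - 1).choose k : ℝ) * (-1) ^ k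
            * (exp (-(lam * (k + 1)) * x) / (x + b)) := by
    intro x
    have hpow : ∀ k : ℕ, exp (-lam * x) ^ (k + 1) = exp (-(lam * (k + 1)) * x) := fun k => by
      rw [← exp_nat_mul]
      push_cast
      ring_nf
    calc _ = lam / (x + b) * (M * (1 - exp (-lam * x)) ^ (M - 1) * exp (-lam * x)) := by ring
      _ = _ := by
        rw [natCast_mul_one_sub_pow_pred_mul, Finset.mul_sum]
        refine Finset.sum_congr rfl fun k _ => ?_
        rw [hpow]
        ring
  rw [setIntegral_congr_fun measurableSet_Ioi fun x _ => hexpand x,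
    integral_finsetSum _ fun k _ => (integrableOn_exp_neg_mul_div_add_Ioi (hrate k) hb).const_mul _]
  refine Finset.sum_congr rfl fun k _ => ?_
  rw [integral_const_mul, integral_exp_neg_mul_div_add_Ioi (hrate k) hb]
  ring

/-- Exact evaluation of `E[1/(g_max + b)]` for the maximum of `M` i.i.d.
exponential(λ) random variables:
`∫₀^∞ (1/(x+b)) M(1-e^{-λx})^{M-1} λe^{-λx} dx
  = Σ_{k=0}^{M-1} M λ C(M-1,k) (-1)^k e^{λ(k+1)b} E₁(λ(k+1)b)`,
where `E₁(z) = ∫_z^∞ e^{-t}/t dt` is the exponential integral. -/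
theorem diversity_expectation_exact (lam b : ℝ) (hlam : 0 < lam) (hb : 0 < b)
    (M : ℕ) (hM : 1 ≤ M) :
    (∫ x in Set.Ioi (0:ℝ),
        (1 / (x + b)) * ((M : ℝ) * (1 - Real.exp (-lam * x)) ^ (M - 1)
          * (lam * Real.exp (-lam * x))))
    = ∑ k ∈ Finset.range M,
        (M : ℝ) * lam * (Nat.choose (M - 1) k : ℝ) * (-1 : ℝ) ^ k
          * Real.exp (lam * (k + 1) * b)
          * (∫ t in Set.Ioi (lam * (k + 1) * b), Real.exp (-t) / t) :=
  diversity_expectation_exact_general lam b hlam hb M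
end

section
/- Let λ > 0 and b > 0. Then, as t → 0⁺, λ ∫₀^t 1/(λb − ln(1 − e^{−τ})) dτ is asymptotically equivalent to λt/(λb + ln(1/t)), i.e. the ratio of the two quantities tends to 1 as t → 0 from the right. -/
/-!
Write `c = λb`. Both sides vanish at `0⁺`, so by L'Hôpital's rule it suffices to compare
derivatives: with `X = c - log t` and `D = c - log (1 - e^{-t})` their ratio is
`X² / (D (X + 1))`. Since `1 - e^{-t} ~ t`, the difference `D - X` tends to `0` while `X → ∞`,
so this ratio tends to `1`.
-/

open MeasureTheory Filter Real Topology Set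

noncomputable def logKernel (c τ : ℝ) : ℝ := 1 / (c - log (1 - exp (-τ)))

lemma one_sub_exp_neg_pos {τ : ℝ} (hτ : 0 < τ) : 0 < 1 - exp (-τ) :=
  sub_pos.2 (exp_lt_one_iff.2 (neg_neg_of_pos hτ))

lemma log_one_sub_exp_neg_nonpos {τ : ℝ} (hτ : 0 ≤ τ) : log (1 - exp (-τ)) ≤ 0 :=
  log_nonpos (sub_nonneg.2 (exp_le_one_iff.2 (neg_nonpos.2 hτ))) (sub_le_self _ (exp_pos _).le)

lemma tendsto_log_one_sub_exp_neg_sub_log :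
    Tendsto (fun t => log (1 - exp (-t)) - log t) (𝓝[>] 0) (𝓝 0) := by
  have hderiv : HasDerivAt (fun t => 1 - exp (-t)) 1 0 := by
    simpa using ((hasDerivAt_neg (0 : ℝ)).exp).const_sub 1
  have hslope := (continuousAt_log one_ne_zero).tendsto.comp hderiv.tendsto_slope_zero_right
  rw [log_one] at hslope
  refine hslope.congr' ?_
  filter_upwards [self_mem_nhdsWithin] with t (ht : 0 < t)
  simp [log_mul (inv_ne_zero ht.ne') (one_sub_exp_neg_pos ht).ne', log_inv]
  ring

lemma tendsto_sub_log_atTop (c : ℝ) : Tendsto (fun t => c - log t) (𝓝[>] 0) atTop := by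
  simpa only [sub_eq_add_neg, Function.comp_apply] using
    tendsto_atTop_add_const_left _ c (tendsto_neg_atBot_atTop.comp tendsto_log_nhdsGT_zero)

section LogKernel

variable {c : ℝ}

lemma le_sub_log_one_sub_exp_neg {τ : ℝ} (hτ : 0 ≤ τ) : c ≤ c - log (1 - exp (-τ)) := by
  linarith [log_one_sub_exp_neg_nonpos hτ]

lemma logKernel_nonneg (hc : 0 < c) {τ : ℝ} (hτ : 0 ≤ τ) : 0 ≤ logKernel c τ :=
  one_div_nonneg.2 (hc.le.trans (le_sub_log_one_sub_exp_neg hτ))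

lemma logKernel_le_inv (hc : 0 < c) {τ : ℝ} (hτ : 0 ≤ τ) : logKernel c τ ≤ c⁻¹ := by
  rw [logKernel, one_div]
  exact inv_anti₀ hc (le_sub_log_one_sub_exp_neg hτ)

lemma norm_logKernel_le (hc : 0 < c) {τ : ℝ} (hτ : 0 ≤ τ) : ‖logKernel c τ‖ ≤ c⁻¹ := by
  rw [norm_of_nonneg (logKernel_nonneg hc hτ)]
  exact logKernel_le_inv hc hτ

lemma measurable_logKernel : Measurable (logKernel c) := by
  unfold logKernel
  fun_prop

lemma continuousAt_logKernel (hc : 0 < c) {τ : ℝ} (hτ : 0 < τ) : ContinuousAt (logKernel c) τ := by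
  have hlog : ContinuousAt (fun τ => log (1 - exp (-τ))) τ :=
    (by fun_prop : ContinuousAt (fun τ => 1 - exp (-τ)) τ).log (one_sub_exp_neg_pos hτ).ne'
  exact continuousAt_const.div (continuousAt_const.sub hlog)
    (hc.trans_le (le_sub_log_one_sub_exp_neg hτ.le)).ne'

lemma intervalIntegrable_logKernel (hc : 0 < c) {t : ℝ} (ht : 0 ≤ t) :
    IntervalIntegrable (logKernel c) volume 0 t := by
  rw [intervalIntegrable_iff_integrableOn_Ioc_of_le ht]
  refine (integrable_const c⁻¹).mono' measurable_logKernel.aestronglyMeasurable ?_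
  filter_upwards [ae_restrict_mem measurableSet_Ioc] with τ hτ
  exact norm_logKernel_le hc hτ.1.le

lemma hasDerivAt_integral_logKernel (hc : 0 < c) {t : ℝ} (ht : 0 < t) :
    HasDerivAt (fun u => ∫ τ in 0..u, logKernel c τ) (logKernel c t) t :=
  intervalIntegral.integral_hasDerivAt_right (intervalIntegrable_logKernel hc ht.le)
    measurable_logKernel.stronglyMeasurable.stronglyMeasurableAtFilter
    (continuousAt_logKernel hc ht)

lemma tendsto_integral_logKernel_zero (hc : 0 < c) :
    Tendsto (fun t => ∫ τ in 0..t, logKernel c τ) (𝓝[>] 0) (𝓝 0) := by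
  have hbound : Tendsto (fun t => c⁻¹ * |t - 0|) (𝓝[>] 0) (𝓝 0) := by
    refine ((by fun_prop : Continuous fun t : ℝ => c⁻¹ * |t - 0|).tendsto' 0 0 ?_).mono_left
      nhdsWithin_le_nhds
    simp
  refine squeeze_zero_norm' ?_ hbound
  filter_upwards [self_mem_nhdsWithin] with t (ht : 0 < t)
  refine intervalIntegral.norm_integral_le_of_norm_le_const fun τ hτ => ?_
  rw [uIoc_of_le ht.le] at hτ
  exact norm_logKernel_le hc hτ.1.le

end LogKernel

lemma hasDerivAt_div_sub_log (c : ℝ) {t : ℝ} (ht : 0 < t) (hX : c - log t ≠ 0) :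
    HasDerivAt (fun u => u / (c - log u)) ((c - log t + 1) / (c - log t) ^ 2) t := by
  refine ((hasDerivAt_id' t).div ((hasDerivAt_log ht.ne').const_sub c) hX).congr_deriv ?_
  field_simp
  ring

lemma tendsto_div_sub_log_zero (c : ℝ) :
    Tendsto (fun t => t / (c - log t)) (𝓝[>] 0) (𝓝 0) :=
  (tendsto_nhdsWithin_of_tendsto_nhds tendsto_id).div_atTop (tendsto_sub_log_atTop c)

lemma tendsto_logKernel_div_deriv (c : ℝ) :
    Tendsto (fun t => logKernel c t / ((c - log t + 1) / (c - log t) ^ 2)) (𝓝[>] 0) (𝓝 1) := by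
  set X := fun t => c - log t
  set u := fun t => log (1 - exp (-t)) - log t
  have hXinv : Tendsto (fun t => (X t)⁻¹) (𝓝[>] 0) (𝓝 0) :=
    (tendsto_sub_log_atTop c).inv_tendsto_atTop
  have hlim : Tendsto (fun t => ((1 - u t * (X t)⁻¹) * (1 + (X t)⁻¹))⁻¹) (𝓝[>] 0) (𝓝 1) := by
    simpa using (((tendsto_log_one_sub_exp_neg_sub_log.mul hXinv).const_sub 1).mul
      (hXinv.const_add 1)).inv₀ (by norm_num)
  -- `D = X - u`, so the ratio is `((D / X) * ((X + 1) / X))⁻¹`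
  refine hlim.congr' ?_
  filter_upwards [(tendsto_sub_log_atTop c).eventually_gt_atTop 0] with t hX
  simp only [logKernel, X, u]
  field_simp
  ring

theorem tendsto_integral_logKernel_div (c : ℝ) (hc : 0 < c) :
    Tendsto (fun t => (∫ τ in 0..t, logKernel c τ) / (t / (c - log t))) (𝓝[>] 0) (𝓝 1) := by
  have hX := (tendsto_sub_log_atTop c).eventually_gt_atTop 0
  refine HasDerivAt.lhopital_zero_nhdsGT ?_ ?_ ?_ (tendsto_integral_logKernel_zero hc)
    (tendsto_div_sub_log_zero c) (tendsto_logKernel_div_deriv c)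
  · filter_upwards [self_mem_nhdsWithin] with t ht
    exact hasDerivAt_integral_logKernel hc ht
  · filter_upwards [self_mem_nhdsWithin, hX] with t ht hXt
    exact hasDerivAt_div_sub_log c ht hXt.ne'
  · filter_upwards [hX] with t hXt
    positivity

/-- As `t → 0⁺`,
`λ ∫₀^t 1/(λb - ln(1 - e^{-τ})) dτ ~ λt/(λb + ln(1/t))`,
i.e. the ratio of the two quantities tends to 1 from the right. -/
theorem small_t_asymptotics (lam b : ℝ) (hlam : 0 < lam) (hb : 0 < b) :
    Tendsto (fun t : ℝ =>
        (lam * ∫ τ in (0:ℝ)..t, 1 / (lam * b - Real.log (1 - Real.exp (-τ)))) /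
        (lam * t / (lam * b + Real.log (1 / t))))
      (nhdsWithin 0 (Set.Ioi 0)) (nhds 1) := by
  refine (tendsto_integral_logKernel_div _ (mul_pos hlam hb)).congr fun t => ?_
  rw [one_div t, log_inv, ← sub_eq_add_neg, mul_div_assoc lam t, mul_div_mul_left _ _ hlam.ne']
  rfl
end

section
/- Let σθ² > 0, σv² > 0, σn² > 0, λ > 0, and set A = σθ²σv²/(σθ²+σv²) and B = σn²σθ²/(σv²(σθ²+σv²)). For a positive integer M define E[D_M] = ∫₀^∞ (1/σθ² + x/(xσv² + σn²))^{−1} · M(1−e^{−λx})^{M−1} λ e^{−λx} dx. Then ln(M) · (E[D_M] − A) → A·B·λ as M → ∞; in particular E[D_M] is asymptotically equivalent to A·[1 + B·λ/ln(M)] as M → ∞. -/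
/-!
With `c = sθ + sv`, the distortion splits as `A + (sθ² sn / c) · (c x + sn)⁻¹`, so everything
reduces to `log M · E[(c X_M + sn)⁻¹] → λ / c` for the maximum `X_M` of `M` exponentials.
Its CDF `(1 - e^{-λt})^M` lies between `1 - M e^{-λt}` (union bound) and `exp (-M e^{-λt})`,
hence is `≥ 1 - 1/log M` at `T_M = (log M + log log M)/λ` and `≤ 1/M` at
`S_M = (log M - log log M)/λ`. As `x ↦ (c x + sn)⁻¹` is decreasing, the expectation lies between
`(c T_M + sn)⁻¹ P(X_M ≤ T_M)` and `sn⁻¹ P(X_M ≤ S_M) + (c S_M + sn)⁻¹`, and both bounds are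
`λ / (c log M) + o(1 / log M)`.
-/

open MeasureTheory Filter Real Set Topology

namespace DiversityDistortion

section AntitoneAgainstDensity

variable {p g : ℝ → ℝ} {a : ℝ}

theorem integrableOn_mul_of_antitoneOn (hpi : IntegrableOn p (Ioi a))
    (hg : AntitoneOn g (Ici a)) (hg0 : ∀ x ∈ Ici a, 0 ≤ g x) :
    IntegrableOn (fun x => g x * p x) (Ioi a) := by
  refine hpi.bdd_mul (c := g a) (aemeasurable_restrict_of_antitoneOn measurableSet_Ioi
    (hg.mono Ioi_subset_Ici_self)).aestronglyMeasurable ?_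
  filter_upwards [ae_restrict_mem measurableSet_Ioi] with x hx
  rw [norm_of_nonneg (hg0 x (mem_Ici_of_Ioi hx))]
  exact hg self_mem_Ici (mem_Ici_of_Ioi hx) hx.le

theorem mul_setIntegral_Ioc_le_setIntegral_mul (hp : ∀ x ∈ Ioi a, 0 ≤ p x)
    (hpi : IntegrableOn p (Ioi a)) (hg : AntitoneOn g (Ici a)) (hg0 : ∀ x ∈ Ici a, 0 ≤ g x)
    {t : ℝ} (ht : a ≤ t) :
    g t * ∫ x in Ioc a t, p x ≤ ∫ x in Ioi a, g x * p x := by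
  have hgp := integrableOn_mul_of_antitoneOn hpi hg hg0
  calc g t * ∫ x in Ioc a t, p x = ∫ x in Ioc a t, g t * p x := (integral_const_mul _ _).symm
    _ ≤ ∫ x in Ioc a t, g x * p x :=
      setIntegral_mono_on ((hpi.mono_set Ioc_subset_Ioi_self).const_mul _)
        (hgp.mono_set Ioc_subset_Ioi_self) measurableSet_Ioc fun x hx =>
          mul_le_mul_of_nonneg_right (hg (mem_Ici_of_Ioi hx.1) ht hx.2) (hp x hx.1)
    _ ≤ ∫ x in Ioi a, g x * p x := by
      refine setIntegral_mono_set hgp ?_ Ioc_subset_Ioi_self.eventuallyLE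
      filter_upwards [ae_restrict_mem measurableSet_Ioi] with x hx
      exact mul_nonneg (hg0 x (mem_Ici_of_Ioi hx)) (hp x hx)

theorem setIntegral_mul_le (hp : ∀ x ∈ Ioi a, 0 ≤ p x) (hpi : IntegrableOn p (Ioi a))
    (hg : AntitoneOn g (Ici a)) (hg0 : ∀ x ∈ Ici a, 0 ≤ g x) {t : ℝ} (ht : a ≤ t) :
    ∫ x in Ioi a, g x * p x ≤ g a * (∫ x in Ioc a t, p x) + g t * ∫ x in Ioi a, p x := by
  have hgp := integrableOn_mul_of_antitoneOn hpi hg hg0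
  have hsub : Ioi t ⊆ Ioi a := Ioi_subset_Ioi ht
  have hsplit : ∫ x in Ioi a, g x * p x =
      (∫ x in Ioc a t, g x * p x) + ∫ x in Ioi t, g x * p x := by
    conv_lhs => rw [← Ioc_union_Ioi_eq_Ioi ht]
    exact setIntegral_union Ioc_disjoint_Ioi_same measurableSet_Ioi
      (hgp.mono_set Ioc_subset_Ioi_self) (hgp.mono_set hsub)
  have hnear : ∫ x in Ioc a t, g x * p x ≤ g a * ∫ x in Ioc a t, p x := by
    rw [← integral_const_mul]
    exact setIntegral_mono_on (hgp.mono_set Ioc_subset_Ioi_self)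
      ((hpi.mono_set Ioc_subset_Ioi_self).const_mul _) measurableSet_Ioc fun x hx =>
        mul_le_mul_of_nonneg_right (hg self_mem_Ici (mem_Ici_of_Ioi hx.1) hx.1.le) (hp x hx.1)
  have htail : ∫ x in Ioi t, g x * p x ≤ g t * ∫ x in Ioi a, p x := by
    rw [← integral_const_mul]
    calc ∫ x in Ioi t, g x * p x ≤ ∫ x in Ioi t, g t * p x :=
          setIntegral_mono_on (hgp.mono_set hsub) ((hpi.mono_set hsub).const_mul _)
            measurableSet_Ioi fun x hx =>
              mul_le_mul_of_nonneg_right (hg (mem_Ici.2 ht) (mem_Ici_of_Ioi (hsub hx)) hx.out.le)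
                (hp x (hsub hx))
      _ ≤ ∫ x in Ioi a, g t * p x := by
        refine setIntegral_mono_set (hpi.const_mul _) ?_ hsub.eventuallyLE
        filter_upwards [ae_restrict_mem measurableSet_Ioi] with x hx
        exact mul_nonneg (hg0 t ht) (hp x hx)
  rw [hsplit]
  exact add_le_add hnear htail

end AntitoneAgainstDensity

section MaxOfExponentials

variable {lam : ℝ} {M : ℕ} {t : ℝ}

noncomputable def maxExpCDF (lam : ℝ) (M : ℕ) (x : ℝ) : ℝ :=
  (1 - exp (-lam * x)) ^ M

noncomputable def maxExpPDF (lam : ℝ) (M : ℕ) (x : ℝ) : ℝ :=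
  M * (1 - exp (-lam * x)) ^ (M - 1) * (lam * exp (-lam * x))

theorem hasDerivAt_maxExpCDF (lam : ℝ) (M : ℕ) (x : ℝ) :
    HasDerivAt (maxExpCDF lam M) (maxExpPDF lam M x) x := by
  refine ((((hasDerivAt_id x).const_mul (-lam)).exp.const_sub 1).fun_pow M).congr_deriv ?_
  simp only [maxExpPDF, id]
  ring

theorem exp_neg_mul_le_one (hlam : 0 ≤ lam) (ht : 0 ≤ t) : exp (-lam * t) ≤ 1 :=
  exp_le_one_iff.2 (by nlinarith)

theorem maxExpPDF_nonneg (hlam : 0 ≤ lam) (ht : 0 ≤ t) : 0 ≤ maxExpPDF lam M t := by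
  have := exp_neg_mul_le_one hlam ht
  unfold maxExpPDF
  have : 0 ≤ 1 - exp (-lam * t) := by linarith
  positivity

theorem maxExpCDF_zero (hM : M ≠ 0) : maxExpCDF lam M 0 = 0 := by
  simp [maxExpCDF, hM]

theorem maxExpCDF_nonneg (hlam : 0 ≤ lam) (ht : 0 ≤ t) : 0 ≤ maxExpCDF lam M t :=
  pow_nonneg (by linarith [exp_neg_mul_le_one hlam ht]) M

theorem maxExpCDF_le_one (hlam : 0 ≤ lam) (ht : 0 ≤ t) : maxExpCDF lam M t ≤ 1 :=
  pow_le_one₀ (by linarith [exp_neg_mul_le_one hlam ht]) (by linarith [exp_pos (-lam * t)])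

theorem tendsto_maxExpCDF_atTop (hlam : 0 < lam) :
    Tendsto (maxExpCDF lam M) atTop (𝓝 1) := by
  have h : Tendsto (fun x => exp (-lam * x)) atTop (𝓝 0) :=
    tendsto_exp_atBot.comp (tendsto_id.const_mul_atTop_of_neg (neg_neg_iff_pos.2 hlam))
  have h' := (h.const_sub 1).pow M
  rwa [sub_zero, one_pow] at h'

theorem integrableOn_maxExpPDF (hlam : 0 < lam) : IntegrableOn (maxExpPDF lam M) (Ioi 0) :=
  integrableOn_Ioi_deriv_of_nonneg' (fun x _ => hasDerivAt_maxExpCDF lam M x)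
    (fun _ hx => maxExpPDF_nonneg hlam.le (le_of_lt hx)) (tendsto_maxExpCDF_atTop hlam)

theorem integral_Ioi_maxExpPDF (hlam : 0 < lam) (hM : M ≠ 0) :
    ∫ x in Ioi 0, maxExpPDF lam M x = 1 := by
  rw [integral_Ioi_of_hasDerivAt_of_nonneg' (fun x _ => hasDerivAt_maxExpCDF lam M x)
    (fun _ hx => maxExpPDF_nonneg hlam.le (le_of_lt hx)) (tendsto_maxExpCDF_atTop hlam),
    maxExpCDF_zero hM, sub_zero]

theorem setIntegral_Ioc_maxExpPDF (hM : M ≠ 0) (ht : 0 ≤ t) :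
    ∫ x in Ioc 0 t, maxExpPDF lam M x = maxExpCDF lam M t := by
  have hcont : Continuous (maxExpPDF lam M) := by unfold maxExpPDF; fun_prop
  rw [← intervalIntegral.integral_of_le ht, intervalIntegral.integral_eq_sub_of_hasDerivAt
    (fun x _ => hasDerivAt_maxExpCDF lam M x) (hcont.intervalIntegrable 0 t), maxExpCDF_zero hM,
    sub_zero]

-- Union bound: `P(max > t) ≤ M P(X > t)`.
theorem one_sub_mul_exp_le_maxExpCDF (hlam : 0 ≤ lam) (ht : 0 ≤ t) :
    1 - M * exp (-lam * t) ≤ maxExpCDF lam M t := by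
  have h := one_add_mul_le_pow (a := -exp (-lam * t))
    (by linarith [exp_neg_mul_le_one hlam ht]) M
  simpa [maxExpCDF, sub_eq_add_neg] using h

theorem maxExpCDF_le_exp (hlam : 0 ≤ lam) (ht : 0 ≤ t) :
    maxExpCDF lam M t ≤ exp (-(M * exp (-lam * t))) := by
  calc maxExpCDF lam M t ≤ exp (-exp (-lam * t)) ^ M :=
        pow_le_pow_left₀ (by linarith [exp_neg_mul_le_one hlam ht]) (one_sub_le_exp_neg _) M
    _ = exp (-(M * exp (-lam * t))) := by rw [← exp_nat_mul]; ring_nf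

theorem mul_exp_neg_mul_log_add_div {x : ℝ} (hx : 0 < x) (hlam : lam ≠ 0) (s : ℝ) :
    x * exp (-lam * ((log x + s) / lam)) = exp (-s) := by
  rw [show -lam * ((log x + s) / lam) = -log x + -s by field_simp; ring, exp_add, exp_neg,
    exp_log hx, mul_inv_cancel_left₀ hx.ne']

end MaxOfExponentials

section Asymptotics

variable {lam : ℝ}

theorem tendsto_mul_inv_add_of_tendsto_div {c s : ℝ} {r : ℝ → ℝ} (hc : c ≠ 0) (hlam : lam ≠ 0)
    (hr : Tendsto (fun y => r y / y) atTop (𝓝 0)) :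
    Tendsto (fun y => y * (c * ((y + r y) / lam) + s)⁻¹) atTop (𝓝 (lam / c)) := by
  have h : Tendsto (fun y => c / lam * (1 + r y / y) + s * y⁻¹) atTop
      (𝓝 (c / lam * (1 + 0) + s * 0)) :=
    ((hr.const_add 1).const_mul _).add (tendsto_inv_atTop_zero.const_mul s)
  rw [add_zero, mul_one, mul_zero, add_zero] at h
  rw [← inv_div]
  refine (h.inv₀ (div_ne_zero hc hlam)).congr' ?_
  filter_upwards [eventually_gt_atTop 0] with y hy
  rw [← inv_inv y, ← mul_inv]
  congr 1
  field_simp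

theorem tendsto_log_natCast_atTop : Tendsto (fun M : ℕ => log (M : ℝ)) atTop atTop :=
  tendsto_log_atTop.comp tendsto_natCast_atTop_atTop

theorem one_lt_natCast_of_one_lt_log {M : ℕ} (hM : 1 < log (M : ℝ)) : 1 < (M : ℝ) :=
  (log_pos_iff (Nat.cast_nonneg M)).1 (by linarith)

theorem tendsto_maxExpCDF_log_add_log_log (hlam : 0 < lam) :
    Tendsto (fun M : ℕ => maxExpCDF lam M ((log M + log (log M)) / lam)) atTop (𝓝 1) := by
  have hlow : Tendsto (fun M : ℕ => 1 - (log (M : ℝ))⁻¹) atTop (𝓝 1) := by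
    simpa using (tendsto_inv_atTop_zero.comp tendsto_log_natCast_atTop).const_sub 1
  refine tendsto_of_tendsto_of_tendsto_of_le_of_le' hlow tendsto_const_nhds ?_ ?_ <;>
    filter_upwards [tendsto_log_natCast_atTop.eventually_gt_atTop 1] with M hM <;>
    have hT : 0 ≤ (log M + log (log M)) / lam :=
      div_nonneg (add_nonneg (by linarith) (log_nonneg hM.le)) hlam.le
  · calc 1 - (log (M : ℝ))⁻¹ = 1 - M * exp (-lam * ((log M + log (log M)) / lam)) := by
          rw [mul_exp_neg_mul_log_add_div (by linarith [one_lt_natCast_of_one_lt_log hM])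
            hlam.ne', exp_neg, exp_log (by linarith)]
      _ ≤ _ := one_sub_mul_exp_le_maxExpCDF hlam.le hT
  · exact maxExpCDF_le_one hlam.le hT

theorem tendsto_log_mul_maxExpCDF_log_sub_log_log (hlam : 0 < lam) :
    Tendsto (fun M : ℕ => log M * maxExpCDF lam M ((log M + -log (log M)) / lam)) atTop
      (𝓝 0) := by
  refine squeeze_zero' ?_ ?_
    (isLittleO_log_id_atTop.tendsto_div_nhds_zero.comp tendsto_natCast_atTop_atTop) <;>
    filter_upwards [tendsto_log_natCast_atTop.eventually_gt_atTop 1] with M hM <;>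
    have hS : 0 ≤ (log M + -log (log M)) / lam :=
      div_nonneg (by linarith [log_le_sub_one_of_pos (by linarith : 0 < log (M : ℝ))]) hlam.le
  · exact mul_nonneg (by linarith) (maxExpCDF_nonneg hlam.le hS)
  · have hM0 : 0 < (M : ℝ) := by linarith [one_lt_natCast_of_one_lt_log hM]
    calc log M * maxExpCDF lam M ((log M + -log (log M)) / lam)
        ≤ log M * exp (-(M * exp (-lam * ((log M + -log (log M)) / lam)))) :=
          mul_le_mul_of_nonneg_left (maxExpCDF_le_exp hlam.le hS) (by linarith)
      _ = log M / M := by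
          rw [mul_exp_neg_mul_log_add_div hM0 hlam.ne', neg_neg, exp_log (by linarith), exp_neg,
            exp_log hM0, div_eq_mul_inv]

theorem antitoneOn_inv_mul_add {c s : ℝ} (hc : 0 ≤ c) (hs : 0 < s) :
    AntitoneOn (fun x => (c * x + s)⁻¹) (Ici 0) := fun x hx _ _ hxy => by
  have := hx.out
  dsimp only
  gcongr

theorem tendsto_log_mul_integral_inv_affine_mul_maxExpPDF {c s : ℝ} (hc : 0 < c) (hs : 0 < s)
    (hlam : 0 < lam) :
    Tendsto (fun M : ℕ => log M * ∫ x in Ioi 0, (c * x + s)⁻¹ * maxExpPDF lam M x) atTop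
      (𝓝 (lam / c)) := by
  set g : ℝ → ℝ := fun x => (c * x + s)⁻¹
  have hg : AntitoneOn g (Ici 0) := antitoneOn_inv_mul_add hc.le hs
  have hg0 : ∀ x ∈ Ici (0 : ℝ), 0 ≤ g x := fun x hx => by
    have := hx.out
    positivity
  set T : ℕ → ℝ := fun M => (log M + log (log M)) / lam
  set S : ℕ → ℝ := fun M => (log M + -log (log M)) / lam
  have hlogdiv := isLittleO_log_id_atTop.tendsto_div_nhds_zero
  have hgT : Tendsto (fun M : ℕ => log M * g (T M)) atTop (𝓝 (lam / c)) :=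
    (tendsto_mul_inv_add_of_tendsto_div hc.ne' hlam.ne' hlogdiv).comp tendsto_log_natCast_atTop
  have hgS : Tendsto (fun M : ℕ => log M * g (S M)) atTop (𝓝 (lam / c)) :=
    (tendsto_mul_inv_add_of_tendsto_div (r := fun y => -log y) hc.ne' hlam.ne'
      (by simpa [neg_div] using hlogdiv.neg)).comp tendsto_log_natCast_atTop
  have hlower := hgT.mul (tendsto_maxExpCDF_log_add_log_log hlam)
  have hupper := ((tendsto_log_mul_maxExpCDF_log_sub_log_log hlam).const_mul (g 0)).add hgS
  rw [mul_one] at hlower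
  rw [mul_zero, zero_add] at hupper
  have hpdf := fun M : ℕ => integrableOn_maxExpPDF (M := M) hlam
  have hpdf0 : ∀ M : ℕ, ∀ x ∈ Ioi (0 : ℝ), 0 ≤ maxExpPDF lam M x :=
    fun M x hx => maxExpPDF_nonneg hlam.le (le_of_lt hx)
  refine tendsto_of_tendsto_of_tendsto_of_le_of_le' hlower hupper ?_ ?_ <;>
    filter_upwards [tendsto_log_natCast_atTop.eventually_gt_atTop 1] with M hM <;>
    have hM0 : M ≠ 0 := by rintro rfl; norm_num at hM
  · have hT : 0 ≤ T M := div_nonneg (add_nonneg (by linarith) (log_nonneg hM.le)) hlam.le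
    have h := mul_setIntegral_Ioc_le_setIntegral_mul (hpdf0 M) (hpdf M) hg hg0 hT
    rw [setIntegral_Ioc_maxExpPDF hM0 hT] at h
    rw [mul_assoc]
    exact mul_le_mul_of_nonneg_left h (by linarith)
  · have hS : 0 ≤ S M :=
      div_nonneg (by linarith [log_le_sub_one_of_pos (by linarith : 0 < log (M : ℝ))]) hlam.le
    have h := setIntegral_mul_le (hpdf0 M) (hpdf M) hg hg0 hS
    rw [setIntegral_Ioc_maxExpPDF hM0 hS, integral_Ioi_maxExpPDF hlam hM0, mul_one] at h
    calc log M * ∫ x in Ioi 0, g x * maxExpPDF lam M x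
        ≤ log M * (g 0 * maxExpCDF lam M (S M) + g (S M)) :=
          mul_le_mul_of_nonneg_left h (by linarith)
      _ = g 0 * (log M * maxExpCDF lam M (S M)) + log M * g (S M) := by ring

theorem tendsto_div_mul_one_add_div {α : Type*} {l : Filter α} {u f : α → ℝ} {A L : ℝ} (b : ℝ)
    (hu : Tendsto u l atTop) (hf : Tendsto (fun a => u a * (f a - A)) l (𝓝 L)) (hA : A ≠ 0) :
    Tendsto (fun a => f a / (A * (1 + b / u a))) l (𝓝 1) := by
  have hfA : Tendsto f l (𝓝 A) := by
    have h := (hf.mul (tendsto_inv_atTop_zero.comp hu)).const_add A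
    rw [mul_zero, add_zero] at h
    refine h.congr' ?_
    filter_upwards [hu.eventually_gt_atTop 0] with a ha
    simp only [Function.comp]
    field_simp
    ring
  have hden : Tendsto (fun a => A * (1 + b / u a)) l (𝓝 (A * (1 + 0))) :=
    (tendsto_const_nhds.add (tendsto_const_nhds.div_atTop hu)).const_mul A
  rw [add_zero, mul_one] at hden
  have h := hfA.div hden hA
  rwa [div_self hA] at h

end Asymptotics

section Distortion

variable {sθ sv sn lam : ℝ}

noncomputable def distortion (sθ sv sn x : ℝ) : ℝ :=
  (1 / sθ + x / (x * sv + sn))⁻¹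

noncomputable def expectedDistortion (sθ sv sn lam : ℝ) (M : ℕ) : ℝ :=
  ∫ x in Ioi 0, distortion sθ sv sn x * maxExpPDF lam M x

theorem distortion_eq (hθ : 0 < sθ) (hv : 0 < sv) (hn : 0 < sn) {x : ℝ} (hx : 0 ≤ x) :
    distortion sθ sv sn x =
      sθ * sv / (sθ + sv) + sθ ^ 2 * sn / (sθ + sv) * ((sθ + sv) * x + sn)⁻¹ := by
  have h1 : 0 < x * sv + sn := by positivity
  have h2 : 0 < (sθ + sv) * x + sn := by positivity
  unfold distortion
  field_simp
  ring

theorem expectedDistortion_eq (hθ : 0 < sθ) (hv : 0 < sv) (hn : 0 < sn) (hlam : 0 < lam)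
    {M : ℕ} (hM : M ≠ 0) :
    expectedDistortion sθ sv sn lam M = sθ * sv / (sθ + sv) +
      sθ ^ 2 * sn / (sθ + sv) * ∫ x in Ioi 0, ((sθ + sv) * x + sn)⁻¹ * maxExpPDF lam M x := by
  have hc : 0 < sθ + sv := by positivity
  have hpdf := integrableOn_maxExpPDF (M := M) hlam
  calc expectedDistortion sθ sv sn lam M
      = ∫ x in Ioi 0, (sθ * sv / (sθ + sv) * maxExpPDF lam M x +
          sθ ^ 2 * sn / (sθ + sv) * (((sθ + sv) * x + sn)⁻¹ * maxExpPDF lam M x)) := by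
        refine setIntegral_congr_fun measurableSet_Ioi fun x hx => ?_
        rw [distortion_eq hθ hv hn (le_of_lt hx)]
        ring
    _ = _ := by
        have hinv := integrableOn_mul_of_antitoneOn hpdf (antitoneOn_inv_mul_add hc.le hn)
          fun x hx => inv_nonneg.2 (by nlinarith [hx.out])
        rw [integral_add (hpdf.const_mul _) (hinv.const_mul _), integral_const_mul,
          integral_const_mul, integral_Ioi_maxExpPDF hlam hM, mul_one]

theorem tendsto_log_mul_expectedDistortion_sub (hθ : 0 < sθ) (hv : 0 < sv) (hn : 0 < sn)
    (hlam : 0 < lam) :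
    Tendsto (fun M : ℕ => log M * (expectedDistortion sθ sv sn lam M - sθ * sv / (sθ + sv)))
      atTop (𝓝 (sθ ^ 2 * sn / (sθ + sv) * (lam / (sθ + sv)))) := by
  refine ((tendsto_log_mul_integral_inv_affine_mul_maxExpPDF (by positivity) hn hlam).const_mul
    _).congr' ?_
  filter_upwards [eventually_ne_atTop 0] with M hM
  rw [expectedDistortion_eq hθ hv hn hlam hM]
  ring

end Distortion

end DiversityDistortion

/-- Asymptotics of the expected distortion of the multi-sensor diversity scheme
with unit amplification under Rayleigh fading:
with `A = σθ²σv²/(σθ²+σv²)` and `B = σn²σθ²/(σv²(σθ²+σv²))`,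
`ln(M)·(E[D_M] − A) → A·B·λ`, and consequently
`E[D_M] ~ A·[1 + B·λ/ln(M)]` as `M → ∞`. -/
theorem diversity_distortion_asymptotics (sθ sv sn lam : ℝ)
    (hθ : 0 < sθ) (hv : 0 < sv) (hn : 0 < sn) (hlam : 0 < lam) :
    Tendsto (fun M : ℕ =>
        Real.log M *
          ((∫ x in Set.Ioi (0:ℝ),
              (1 / sθ + x / (x * sv + sn))⁻¹ *
                ((M : ℝ) * (1 - Real.exp (-lam * x)) ^ (M - 1)
                  * (lam * Real.exp (-lam * x))))
            - sθ * sv / (sθ + sv)))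
      atTop (nhds (sθ * sv / (sθ + sv) * (sn * sθ / (sv * (sθ + sv))) * lam)) ∧
    Tendsto (fun M : ℕ =>
        (∫ x in Set.Ioi (0:ℝ),
            (1 / sθ + x / (x * sv + sn))⁻¹ *
              ((M : ℝ) * (1 - Real.exp (-lam * x)) ^ (M - 1)
                * (lam * Real.exp (-lam * x)))) /
          (sθ * sv / (sθ + sv) * (1 + sn * sθ / (sv * (sθ + sv)) * lam / Real.log M)))
      atTop (nhds 1) := by
  have h := DiversityDistortion.tendsto_log_mul_expectedDistortion_sub hθ hv hn hlam
  have hlim : sθ ^ 2 * sn / (sθ + sv) * (lam / (sθ + sv)) =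
      sθ * sv / (sθ + sv) * (sn * sθ / (sv * (sθ + sv))) * lam := by
    field_simp
  rw [hlim] at h
  exact ⟨h, DiversityDistortion.tendsto_div_mul_one_add_div _
    DiversityDistortion.tendsto_log_natCast_atTop h (by positivity)⟩
end

section
/- Let σθ² > 0, σv² > 0, σn² > 0, λ > 0, and set A = σθ²σv²/(σθ²+σv²), B = σn²σθ²/(σv²(σθ²+σv²)) and L = σθ²(1 − 1/e) + A/e. For an integer M ≥ 2 set T_M = (1/λ)ln(M) and define E[D_M] = σθ²·[1 − (1 − 1/M)^{M−1}] + M(1 − 1/M)^{M−1} · ∫_{T_M}^∞ (1/σθ² + x/(xσv² + σn²))^{−1} λ e^{−λx} dx. Then ln(M) · (E[D_M] − L) → (1/e)·A·B·λ as M → ∞; in particular E[D_M] is asymptotically equivalent to L + (1/e)·A·B·λ/ln(M) as M → ∞. -/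
/-!
Given a transmission, the gain is `T_M + Y` with `Y ~ Exp(λ)` (memorylessness), and the
distortion at gain `x` is `A + A B / (x + c)` with `c = σn² / (σθ² + σv²)`. As
`M e^{-λ T_M} = 1`, this gives `E[D_M] - L = (A - σθ²) (p_M - e⁻¹) + A B p_M J_M`, where
`p_M = (1 - 1/M)^(M-1)` and `J_M = ∫₀^∞ λ e^{-λy} / (T_M + c + y) dy`. The first term is
`O(1 / M)` since `e⁻¹ ≤ p_M ≤ e⁻¹ M / (M - 1)`, and `T_M J_M → 1` by dominated convergence,
so `ln M · J_M = λ T_M J_M → λ`.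
-/

open MeasureTheory Filter Real Set Topology

lemma tendsto_nhds_zero_of_tendsto_mul {α : Type*} {l : Filter α} {u g : α → ℝ} {K : ℝ}
    (hu : Tendsto u l atTop) (h : Tendsto (fun a => u a * g a) l (𝓝 K)) :
    Tendsto g l (𝓝 0) := by
  have := hu.inv_tendsto_atTop.mul h
  rw [zero_mul] at this
  refine this.congr' ?_
  filter_upwards [hu.eventually_ne_atTop 0] with a ha
  simp [ha]

lemma tendsto_div_add_div_of_tendsto_mul_sub {α : Type*} {l : Filter α} {u f : α → ℝ}
    {L K : ℝ} (hu : Tendsto u l atTop) (hL : L ≠ 0)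
    (h : Tendsto (fun a => u a * (f a - L)) l (𝓝 K)) :
    Tendsto (fun a => f a / (L + K / u a)) l (𝓝 1) := by
  have hf : Tendsto f l (𝓝 L) := by
    simpa using (tendsto_nhds_zero_of_tendsto_mul hu h).add_const L
  have hden : Tendsto (fun a => L + K / u a) l (𝓝 L) := by
    simpa [div_eq_mul_inv] using (hu.inv_tendsto_atTop.const_mul K).const_add L
  have := hf.div hden hL
  rwa [div_self hL] at this

lemma integral_Ioi_zero_mul_exp_neg_mul {lam : ℝ} (hlam : 0 < lam) :
    ∫ y in Ioi 0, lam * exp (-lam * y) = 1 := by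
  rw [integral_const_mul, integral_exp_mul_Ioi (neg_lt_zero.2 hlam), mul_zero, exp_zero]
  field_simp

lemma setIntegral_Ioi_mul_exp_neg_mul (f : ℝ → ℝ) (lam T : ℝ) :
    ∫ x in Ioi T, f x * (lam * exp (-lam * x)) =
      exp (-lam * T) * ∫ y in Ioi 0, f (T + y) * (lam * exp (-lam * y)) := by
  rw [← (measurePreserving_add_left volume T).setIntegral_preimage_emb
    (measurableEmbedding_addLeft T), preimage_const_add_Ioi, sub_self, ← integral_const_mul]
  congr 1 with y
  rw [mul_add, exp_add]
  ring

lemma integrableOn_Ioi_div_add {f : ℝ → ℝ} (hf : IntegrableOn f (Ioi 0)) {a : ℝ} (ha : 0 < a) :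
    IntegrableOn (fun y => f y / (a + y)) (Ioi 0) := by
  refine (hf.norm.div_const a).mono' (hf.1.aemeasurable.div
    (by fun_prop : Measurable fun y : ℝ => a + y).aemeasurable).aestronglyMeasurable ?_
  filter_upwards [ae_restrict_mem measurableSet_Ioi] with y (hy : 0 < y)
  rw [norm_div, Real.norm_of_nonneg (show 0 ≤ a + y by linarith)]
  gcongr
  linarith

lemma tendsto_div_add_atTop (a : ℝ) : Tendsto (fun T : ℝ => T / (T + a)) atTop (𝓝 1) := by
  have h : Tendsto (fun T : ℝ => (1 + a / T)⁻¹) atTop (𝓝 1) := by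
    simpa using (((tendsto_const_nhds (x := a)).div_atTop tendsto_id).const_add 1).inv₀
      (by simp)
  refine h.congr' ?_
  filter_upwards [eventually_ne_atTop 0] with T hT
  field_simp

/- Dominated convergence: `T / (T + c + y) → 1` pointwise and is bounded by `1`. -/
lemma tendsto_mul_integral_div_add_add {f : ℝ → ℝ} (hf : IntegrableOn f (Ioi 0)) {c : ℝ}
    (hc : 0 ≤ c) :
    Tendsto (fun T => T * ∫ y in Ioi 0, f y / (T + c + y)) atTop (𝓝 (∫ y in Ioi 0, f y)) := by
  have hF (T : ℝ) :
      T * ∫ y in Ioi 0, f y / (T + c + y) = ∫ y in Ioi 0, T / (T + c + y) * f y := by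
    rw [← integral_const_mul]
    congr 1 with y
    ring
  simp_rw [hF]
  refine tendsto_integral_filter_of_dominated_convergence (fun y => ‖f y‖) ?_ ?_ hf.norm ?_
  · filter_upwards [eventually_gt_atTop 0] with T hT
    simpa [mul_div_assoc', mul_comm] using
      ((integrableOn_Ioi_div_add hf (a := T + c) (by linarith)).const_mul T).1
  · filter_upwards [eventually_ge_atTop 0] with T hT
    filter_upwards [ae_restrict_mem measurableSet_Ioi] with y (hy : 0 < y)
    rw [norm_mul, Real.norm_of_nonneg (by positivity)]
    exact mul_le_of_le_one_left (norm_nonneg _) ((div_le_one (by positivity)).2 (by linarith))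
  · refine ae_of_all _ fun y => ?_
    simpa [add_assoc] using (tendsto_div_add_atTop (c + y)).mul_const (f y)

lemma tendsto_mul_integral_exp_neg_mul_div_add {lam c : ℝ} (hlam : 0 < lam) (hc : 0 ≤ c) :
    Tendsto (fun t => t * ∫ y in Ioi 0, lam * exp (-lam * y) / (t / lam + c + y)) atTop
      (𝓝 lam) := by
  have h := ((tendsto_mul_integral_div_add_add ((exp_neg_integrableOn_Ioi 0 hlam).const_mul lam)
    hc).comp (tendsto_id.atTop_div_const hlam)).const_mul lam
  rw [integral_Ioi_zero_mul_exp_neg_mul hlam, mul_one] at h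
  refine h.congr fun t => ?_
  simp only [Function.comp_apply, id]
  field_simp

lemma exp_neg_one_le_one_sub_inv_pow_pred (M : ℕ) : exp (-1) ≤ (1 - 1 / (M : ℝ)) ^ (M - 1) := by
  obtain _ | n := M
  · simp
  have hinv : (1 - 1 / ((n + 1 : ℕ) : ℝ)) ^ (n + 1 - 1) = ((1 + (n : ℝ)⁻¹) ^ n)⁻¹ := by
    rw [Nat.add_sub_cancel, ← inv_pow]
    rcases eq_or_ne n 0 with rfl | hn
    · simp
    · push_cast; field_simp; ring
  rw [hinv, exp_neg]
  exact inv_anti₀ (by positivity) one_add_inv_pow_le_exp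

lemma one_sub_inv_pow_pred_sub_exp_neg_one_le {M : ℕ} (hM : 2 ≤ M) :
    (1 - 1 / (M : ℝ)) ^ (M - 1) - exp (-1) ≤ exp (-1) / (M - 1) := by
  have hM' : (1 : ℝ) < M := by exact_mod_cast hM
  have hpow : (1 - 1 / (M : ℝ)) ^ (M - 1) * (1 - 1 / M) ≤ exp (-1) := by
    rw [← pow_succ, Nat.sub_add_cancel (by omega)]
    exact one_sub_div_pow_le_exp_neg (by linarith)
  rw [le_div_iff₀ (by linarith)]
  have : (1 - 1 / (M : ℝ)) ^ (M - 1) * (M - 1) ≤ exp (-1) * M :=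
    calc (1 - 1 / (M : ℝ)) ^ (M - 1) * (M - 1)
        = (1 - 1 / (M : ℝ)) ^ (M - 1) * (1 - 1 / M) * M := by field_simp
      _ ≤ exp (-1) * M := by gcongr
  linarith

lemma tendsto_log_mul_one_sub_inv_pow_pred_sub_exp_neg_one :
    Tendsto (fun M : ℕ => log M * ((1 - 1 / (M : ℝ)) ^ (M - 1) - exp (-1))) atTop (𝓝 0) := by
  have hlim : Tendsto (fun M : ℕ => exp (-1) * (log M / (M - 1))) atTop (𝓝 0) := by
    simpa [← sub_eq_add_neg] using ((tendsto_pow_log_div_mul_add_atTop 1 (-1) 1 one_ne_zero).comp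
      tendsto_natCast_atTop_atTop).const_mul (exp (-1))
  refine squeeze_zero' (Eventually.of_forall fun M => mul_nonneg (log_natCast_nonneg M)
    (sub_nonneg.2 (exp_neg_one_le_one_sub_inv_pow_pred M))) ?_ hlim
  filter_upwards [eventually_ge_atTop 2] with M hM
  calc log M * ((1 - 1 / (M : ℝ)) ^ (M - 1) - exp (-1))
      ≤ log M * (exp (-1) / (M - 1)) :=
        mul_le_mul_of_nonneg_left (one_sub_inv_pow_pred_sub_exp_neg_one_le hM)
          (log_natCast_nonneg M)
    _ = exp (-1) * (log M / (M - 1)) := by ring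

section Distortion

variable {sθ sv sn : ℝ}

lemma inv_one_div_add_div_eq (hθ : 0 < sθ) (hv : 0 < sv) (hn : 0 < sn) {x : ℝ} (hx : 0 ≤ x) :
    (1 / sθ + x / (x * sv + sn))⁻¹ = sθ * sv / (sθ + sv)
      + sθ * sv / (sθ + sv) * (sn * sθ / (sv * (sθ + sv))) / (x + sn / (sθ + sv)) := by
  have h1 : 0 < x * sv + sn := by positivity
  have h2 : 0 < x + sn / (sθ + sv) := by positivity
  field_simp
  ring

lemma exp_mul_setIntegral_Ioi_distortion_eq (hθ : 0 < sθ) (hv : 0 < sv) (hn : 0 < sn) {lam T : ℝ}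
    (hlam : 0 < lam) (hT : 0 ≤ T) :
    exp (lam * T) * ∫ x in Ioi T, (1 / sθ + x / (x * sv + sn))⁻¹ * (lam * exp (-lam * x)) =
      sθ * sv / (sθ + sv) + sθ * sv / (sθ + sv) * (sn * sθ / (sv * (sθ + sv))) *
        ∫ y in Ioi 0, lam * exp (-lam * y) / (T + sn / (sθ + sv) + y) := by
  set A := sθ * sv / (sθ + sv)
  set AB := A * (sn * sθ / (sv * (sθ + sv)))
  set c := sn / (sθ + sv)
  have hdens : IntegrableOn (fun y => lam * exp (-lam * y)) (Ioi 0) :=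
    (exp_neg_integrableOn_Ioi 0 hlam).const_mul lam
  have hsplit :
      EqOn (fun y => (1 / sθ + (T + y) / ((T + y) * sv + sn))⁻¹ * (lam * exp (-lam * y)))
        (fun y => A * (lam * exp (-lam * y)) + AB * (lam * exp (-lam * y) / (T + c + y)))
        (Ioi 0) := by
    intro y (hy : 0 < y)
    simp only
    rw [inv_one_div_add_div_eq hθ hv hn (by linarith)]
    ring
  rw [setIntegral_Ioi_mul_exp_neg_mul, ← mul_assoc, ← exp_add, neg_mul, add_neg_cancel, exp_zero,
    one_mul, setIntegral_congr_fun measurableSet_Ioi hsplit,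
    integral_add (hdens.const_mul A)
      ((integrableOn_Ioi_div_add hdens (by positivity)).const_mul AB),
    integral_const_mul A, integral_const_mul AB, integral_Ioi_zero_mul_exp_neg_mul hlam, mul_one]

end Distortion

/-- Asymptotics of the expected distortion of the channel-aware ALOHA scheme
with threshold `T_M = (1/λ)ln M` and unit amplification under Rayleigh fading:
with `A = σθ²σv²/(σθ²+σv²)`, `B = σn²σθ²/(σv²(σθ²+σv²))` and
`L = σθ²(1-1/e) + A/e`, one has `ln(M)·(E[D_M] − L) → (1/e)·A·B·λ`,
and consequently `E[D_M] ~ L + (1/e)·A·B·λ/ln(M)` as `M → ∞`. -/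
theorem aloha_distortion_asymptotics (sθ sv sn lam : ℝ)
    (hθ : 0 < sθ) (hv : 0 < sv) (hn : 0 < sn) (hlam : 0 < lam)
    (A B L : ℝ) (hA : A = sθ * sv / (sθ + sv))
    (hB : B = sn * sθ / (sv * (sθ + sv)))
    (hL : L = sθ * (1 - 1 / Real.exp 1) + A / Real.exp 1)
    (ED : ℕ → ℝ)
    (hED : ∀ M : ℕ, 2 ≤ M →
      ED M = sθ * (1 - (1 - 1 / (M : ℝ)) ^ (M - 1))
        + (M : ℝ) * (1 - 1 / (M : ℝ)) ^ (M - 1) *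
          ∫ x in Set.Ioi (Real.log M / lam),
            (1 / sθ + x / (x * sv + sn))⁻¹ * (lam * Real.exp (-lam * x))) :
    Tendsto (fun M : ℕ => Real.log M * (ED M - L)) atTop
      (nhds (1 / Real.exp 1 * A * B * lam)) ∧
    Tendsto (fun M : ℕ => ED M / (L + 1 / Real.exp 1 * A * B * lam / Real.log M))
      atTop (nhds 1) := by
  have hlog : Tendsto (fun M : ℕ => log M) atTop atTop :=
    tendsto_log_atTop.comp tendsto_natCast_atTop_atTop
  have hp := tendsto_log_mul_one_sub_inv_pow_pred_sub_exp_neg_one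
  have hp' : Tendsto (fun M : ℕ => (1 - 1 / (M : ℝ)) ^ (M - 1)) atTop (𝓝 (exp (-1))) := by
    simpa using (tendsto_nhds_zero_of_tendsto_mul hlog hp).add_const (exp (-1))
  have hJ := (tendsto_mul_integral_exp_neg_mul_div_add hlam
    (by positivity : 0 ≤ sn / (sθ + sv))).comp hlog
  have hlim : Tendsto (fun M : ℕ => log M * (ED M - L)) atTop (𝓝 (1 / exp 1 * A * B * lam)) := by
    rw [show 1 / exp 1 * A * B * lam = (A - sθ) * 0 + A * B * (exp (-1) * lam) by
      rw [exp_neg]; ring]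
    refine ((hp.const_mul (A - sθ)).add ((hp'.mul hJ).const_mul (A * B))).congr' ?_
    filter_upwards [eventually_ge_atTop 2] with M hM
    have hdist := exp_mul_setIntegral_Ioi_distortion_eq hθ hv hn hlam
      (div_nonneg (log_natCast_nonneg M) hlam.le)
    rw [mul_div_cancel₀ _ hlam.ne', exp_log (by positivity), ← hA, ← hB] at hdist
    rw [Function.comp_apply, hED M hM, mul_right_comm (M : ℝ), hdist, hL, exp_neg, one_div]
    ring
  have hL0 : L ≠ 0 := by
    have he : 1 / exp 1 < 1 := by rw [div_lt_one (exp_pos 1)]; exact one_lt_exp_iff.2 one_pos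
    rw [hL, hA]
    exact (add_pos (mul_pos hθ (sub_pos.2 he)) (by positivity)).ne'
  exact ⟨hlim, tendsto_div_add_div_of_tendsto_mul_sub hlog hL0 hlim⟩
end

section
/- Let (g_i)_{i≥1} be i.i.d. nonnegative integrable random variables on a probability space with E[√g₁] > 0, and let σθ² > 0, σv² > 0, σn² > 0. For a positive integer M define the random variable D_M = σθ²·(σv²·(1/M)Σ_{i=1}^M g_i + σn²) / (σv²·(1/M)Σ_{i=1}^M g_i + σn² + σθ²·(1/M)(Σ_{i=1}^M √g_i)²). Then M·E[D_M] → (σv²·E[g₁] + σn²)/(E[√g₁])² as M → ∞; in particular the expected distortion E[D_M] decays to zero at rate 1/M. -/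
open MeasureTheory Filter Real ProbabilityTheory

open Finset Topology

/-!
Write `N_M = σv²·(1/M)Σg_i + σn²` and `S_M = (1/M)Σ√g_i`, so that
`M·D_M = σθ²N_M / (N_M/M + σθ²S_M²)`. By the strong law of large numbers `M·D_M` converges almost
surely to `(σv²E[g₁] + σn²)/(E[√g₁])²`, and Fatou's lemma bounds `liminf M·E[D_M]` from below.
For the upper bound fix `β < E[√g₁]`. On `{S_M > β}` we have `M·D_M ≤ N_M/β²`, whose expectation
is `(σv²E[g₁] + σn²)/β²`; elsewhere `D_M ≤ σθ²`, and `P(S_M ≤ β)` decays exponentially in `M`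
(Hoeffding's inequality for the truncations `min(√g_i, c)`), so it is `o(1/M)`.
-/

/-- `x i` is the power gain of channel `i`; `sθ sv sn` are the variances `σθ², σv², σn²`. -/
noncomputable def macDistortion (sθ sv sn : ℝ) (M : ℕ) (x : ℕ → ℝ) : ℝ :=
  sθ * (sv * ((1 / (M : ℝ)) * ∑ i ∈ range M, x i) + sn) /
    (sv * ((1 / (M : ℝ)) * ∑ i ∈ range M, x i) + sn
      + sθ * ((1 / (M : ℝ)) * (∑ i ∈ range M, √(x i)) ^ 2))

section Deterministic

variable {sθ sv sn : ℝ} {M : ℕ} {x : ℕ → ℝ}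

lemma macDistortion_nonneg (hθ : 0 ≤ sθ) (hv : 0 ≤ sv) (hn : 0 ≤ sn) (hx : ∀ i, 0 ≤ x i) :
    0 ≤ macDistortion sθ sv sn M x := by
  have := sum_nonneg fun i (_ : i ∈ range M) => hx i
  unfold macDistortion
  positivity

lemma macDistortion_le (hθ : 0 ≤ sθ) (hv : 0 ≤ sv) (hn : 0 ≤ sn) (hx : ∀ i, 0 ≤ x i) :
    macDistortion sθ sv sn M x ≤ sθ := by
  have := sum_nonneg fun i (_ : i ∈ range M) => hx i
  unfold macDistortion
  apply div_le_of_le_mul₀ (by positivity) hθ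
  have : 0 ≤ sθ * ((1 / (M : ℝ)) * (∑ i ∈ range M, √(x i)) ^ 2) := by positivity
  nlinarith

lemma mul_macDistortion_le_of_le_sum_sqrt (hθ : 0 < sθ) (hv : 0 ≤ sv) (hn : 0 ≤ sn)
    (hx : ∀ i, 0 ≤ x i) (hM : 0 < M) {β : ℝ} (hβ : 0 < β)
    (hβx : M * β ≤ ∑ i ∈ range M, √(x i)) :
    M * macDistortion sθ sv sn M x ≤ (sv * ((1 / (M : ℝ)) * ∑ i ∈ range M, x i) + sn) / β ^ 2 := by
  set N := sv * ((1 / (M : ℝ)) * ∑ i ∈ range M, x i) + sn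
  have hN : 0 ≤ N := by have := sum_nonneg fun i (_ : i ∈ range M) => hx i; positivity
  have hM' : (0 : ℝ) < M := Nat.cast_pos.2 hM
  have hsq : M * β ^ 2 ≤ (1 / (M : ℝ)) * (∑ i ∈ range M, √(x i)) ^ 2 := by
    rw [one_div_mul_eq_div, le_div_iff₀ hM']
    nlinarith [pow_le_pow_left₀ (by positivity) hβx 2]
  calc M * macDistortion sθ sv sn M x
      ≤ M * (sθ * N / (sθ * (M * β ^ 2))) := by
        unfold macDistortion
        gcongr
        linarith [mul_le_mul_of_nonneg_left hsq hθ.le]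
    _ = N / β ^ 2 := by field_simp

lemma tendsto_mul_macDistortion (hθ : sθ ≠ 0) {a b : ℝ}
    (ha : Tendsto (fun M : ℕ => (∑ i ∈ range M, x i) / M) atTop (𝓝 a))
    (hb : Tendsto (fun M : ℕ => (∑ i ∈ range M, √(x i)) / M) atTop (𝓝 b)) (hb0 : b ≠ 0) :
    Tendsto (fun M : ℕ => M * macDistortion sθ sv sn M x) atTop (𝓝 ((sv * a + sn) / b ^ 2)) := by
  have hN := (ha.const_mul sv).add_const sn
  have hlim := (hN.const_mul sθ).div
    ((hN.mul (tendsto_inv_atTop_zero.comp tendsto_natCast_atTop_atTop)).add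
      ((hb.pow 2).const_mul sθ))
    (by simp [hθ, hb0])
  rw [show sθ * (sv * a + sn) / ((sv * a + sn) * 0 + sθ * b ^ 2) = (sv * a + sn) / b ^ 2 by
    field_simp; ring] at hlim
  refine hlim.congr' ((eventually_gt_atTop 0).mono fun M hM => ?_)
  have hM' : (M : ℝ) ≠ 0 := Nat.cast_ne_zero.2 hM.ne'
  simp only [macDistortion, Function.comp_apply, Pi.div_apply]
  field_simp

end Deterministic

section Probability

variable {Ω : Type*} [MeasurableSpace Ω] {μ : Measure Ω}

lemma MeasureTheory.Integrable.sqrt [IsFiniteMeasure μ] {f : Ω → ℝ} (hf : Integrable f μ) :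
    Integrable (fun ω => √(f ω)) μ := by
  refine ((integrable_const 1).add hf.abs).mono' (continuous_sqrt.comp_aestronglyMeasurable hf.1)
    (ae_of_all _ fun ω => ?_)
  rw [Real.norm_eq_abs, abs_of_nonneg (sqrt_nonneg _), Pi.add_apply, sqrt_le_left (by positivity)]
  nlinarith [abs_nonneg (f ω), le_abs_self (f ω)]

lemma exists_lt_integral_min {Y : Ω → ℝ} (hY : Integrable Y μ) {a : ℝ}
    (ha : a < ∫ ω, Y ω ∂μ) : ∃ c : ℝ, 0 < c ∧ a < ∫ ω, min (Y ω) c ∂μ := by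
  have hlim : Tendsto (fun n : ℕ => ∫ ω, min (Y ω) n ∂μ) atTop (𝓝 (∫ ω, Y ω ∂μ)) := by
    refine tendsto_integral_of_dominated_convergence (fun ω => ‖Y ω‖)
      (fun n => (hY.aemeasurable.min aemeasurable_const).aestronglyMeasurable) hY.norm
      (fun n => ae_of_all _ fun ω => ?_) (ae_of_all _ fun ω => ?_)
    · rcases le_total (Y ω) n with h | h
      · rw [min_eq_left h]
      · rw [min_eq_right h, Real.norm_natCast]
        exact h.trans (le_abs_self _)
    · exact tendsto_const_nhds.congr' <|
        (tendsto_natCast_atTop_atTop.eventually_ge_atTop (Y ω)).mono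
          fun n hn => (min_eq_left hn).symm
  obtain ⟨n, hn, hlt⟩ :=
    ((eventually_gt_atTop 0).and (hlim.eventually (eventually_gt_nhds ha))).exists
  exact ⟨n, Nat.cast_pos.2 hn, hlt⟩

lemma tendsto_mul_measureReal_sum_le_sub_of_mem_Icc [IsProbabilityMeasure μ] {X : ℕ → Ω → ℝ}
    (hX : ∀ i, AEMeasurable (X i) μ) (hindep : iIndepFun X μ)
    (hident : ∀ i, IdentDistrib (X i) (X 0) μ μ) {c : ℝ} (hc : 0 < c)
    (hbdd : ∀ i, ∀ᵐ ω ∂μ, X i ω ∈ Set.Icc 0 c) {ε : ℝ} (hε : 0 < ε) :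
    Tendsto (fun n : ℕ => n * μ.real {ω | ∑ i ∈ range n, X i ω ≤ n * (μ[X 0] - ε)})
      atTop (𝓝 0) := by
  set m := μ[X 0]
  set K : NNReal := (‖c‖₊ / 2) ^ 2
  have hK : (0 : ℝ) < K := by
    have := norm_pos_iff.2 hc.ne'
    simp only [K, NNReal.coe_pow, NNReal.coe_div, coe_nnnorm]; positivity
  let V : ℕ → Ω → ℝ := fun i ω => m - X i ω
  have hV : ∀ i, HasSubgaussianMGF (V i) K μ := fun i => by
    have := hasSubgaussianMGF_of_mem_Icc_of_integral_eq_zero (a := m - c) (b := m - 0) (μ := μ)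
      (X := V i) ((hX i).const_sub m) ?_ ?_
    · simpa [K] using this
    · filter_upwards [hbdd i] with ω ⟨h0, hle⟩
      exact ⟨by simp [V]; linarith, by simp [V]; linarith⟩
    · rw [integral_sub (integrable_const m) (Integrable.of_mem_Icc 0 c (hX i) (hbdd i)),
        (hident i).integral_eq]
      simp [m]
  have hVindep : iIndepFun V μ :=
    hindep.comp (fun _ x => m - x) (fun _ => measurable_const.sub measurable_id)
  set r := exp (-ε ^ 2 / (2 * K))
  have hbound : ∀ n : ℕ, 0 < n →
      μ.real {ω | ∑ i ∈ range n, X i ω ≤ n * (m - ε)} ≤ r ^ n := fun n hn => by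
    have hn' : (0 : ℝ) < n := Nat.cast_pos.2 hn
    calc μ.real {ω | ∑ i ∈ range n, X i ω ≤ n * (m - ε)}
        ≤ μ.real {ω | n * ε ≤ ∑ i ∈ range n, V i ω} := by
          refine measureReal_mono (fun ω hω => ?_)
          simp only [Set.mem_ofPred_eq, V, sum_sub_distrib, sum_const, card_range,
            nsmul_eq_mul] at hω ⊢
          linarith
      _ ≤ exp (-(n * ε) ^ 2 / (2 * n * K)) :=
          HasSubgaussianMGF.measure_sum_range_ge_le_of_iIndepFun hVindep (fun i _ => hV i)
            (by positivity)
      _ = r ^ n := by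
          rw [← exp_nat_mul]
          congr 1
          field_simp
  refine squeeze_zero' (Eventually.of_forall fun n => by positivity)
    ((eventually_gt_atTop 0).mono fun n hn =>
      mul_le_mul_of_nonneg_left (hbound n hn) n.cast_nonneg)
    (tendsto_self_mul_const_pow_of_lt_one (exp_nonneg _) (exp_lt_one_iff.2 (div_neg_of_neg_of_pos
      (neg_neg_of_pos (pow_pos hε 2)) (mul_pos two_pos hK))))

lemma tendsto_mul_measureReal_sum_le_sub [IsProbabilityMeasure μ] {Y : ℕ → Ω → ℝ}
    (hindep : iIndepFun Y μ) (hident : ∀ i, IdentDistrib (Y i) (Y 0) μ μ)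
    (hnonneg : ∀ i, 0 ≤ᵐ[μ] Y i) (hint : Integrable (Y 0) μ) {ε : ℝ} (hε : 0 < ε) :
    Tendsto (fun n : ℕ => n * μ.real {ω | ∑ i ∈ range n, Y i ω ≤ n * (μ[Y 0] - ε)})
      atTop (𝓝 0) := by
  obtain ⟨c, hc, hlt⟩ := exists_lt_integral_min hint (sub_lt_self μ[Y 0] (half_pos hε))
  have hmin : Measurable fun x : ℝ => min x c := measurable_id.min measurable_const
  have htrunc := tendsto_mul_measureReal_sum_le_sub_of_mem_Icc
    (fun i => (hident i).aemeasurable_fst.min aemeasurable_const)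
    (hindep.comp (fun _ x => min x c) fun _ => hmin) (fun i => (hident i).comp hmin) hc
    (fun i => (hnonneg i).mono fun ω h => ⟨le_min h hc.le, min_le_right _ _⟩) (half_pos hε)
  refine squeeze_zero (fun n => by positivity) (fun n => ?_) htrunc
  refine mul_le_mul_of_nonneg_left (measureReal_mono fun ω hω => ?_) n.cast_nonneg
  simp only [Set.mem_ofPred_eq] at hω ⊢
  have : ∑ i ∈ range n, min (Y i ω) c ≤ ∑ i ∈ range n, Y i ω :=
    sum_le_sum fun i _ => min_le_left _ _
  nlinarith [n.cast_nonneg (α := ℝ)]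

lemma eventually_lt_integral_of_tendsto_ae [IsProbabilityMeasure μ] {f : ℕ → Ω → ℝ} {c c' : ℝ}
    (hf : ∀ n, 0 ≤ᵐ[μ] f n) (hf_int : ∀ n, Integrable (f n) μ)
    (hlim : ∀ᵐ ω ∂μ, Tendsto (fun n => f n ω) atTop (𝓝 c)) (hc' : c' < c) :
    ∀ᶠ n in atTop, c' < ∫ ω, f n ω ∂μ := by
  rcases lt_or_ge c' 0 with hneg | hnonneg
  · exact Eventually.of_forall fun n => hneg.trans_le (integral_nonneg_of_ae (hf n))
  have hfatou : ENNReal.ofReal c ≤ liminf (fun n => ∫⁻ ω, ENNReal.ofReal (f n ω) ∂μ) atTop :=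
    calc ENNReal.ofReal c = ∫⁻ ω, liminf (fun n => ENNReal.ofReal (f n ω)) atTop ∂μ := by
          rw [lintegral_congr_ae (hlim.mono fun ω h => (ENNReal.tendsto_ofReal h).liminf_eq),
            lintegral_const, measure_univ, mul_one]
      _ ≤ _ := lintegral_liminf_le' fun n => (hf_int n).aemeasurable.ennreal_ofReal
  filter_upwards [eventually_lt_of_lt_liminf
    ((ENNReal.ofReal_lt_ofReal_iff'.2 ⟨hc', hnonneg.trans_lt hc'⟩).trans_le hfatou)] with n hn
  rw [← ofReal_integral_eq_lintegral_ofReal (hf_int n) (hf n)] at hn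
  exact (ENNReal.ofReal_lt_ofReal_iff'.1 hn).1

section Distortion

variable {sθ sv sn : ℝ} {g : ℕ → Ω → ℝ}

lemma integrable_macDistortion [IsFiniteMeasure μ] (hg : ∀ i, AEMeasurable (g i) μ)
    (hnonneg : ∀ i ω, 0 ≤ g i ω) (hθ : 0 ≤ sθ) (hv : 0 ≤ sv) (hn : 0 ≤ sn) (M : ℕ) :
    Integrable (fun ω => macDistortion sθ sv sn M (g · ω)) μ := by
  refine Integrable.of_bound (AEMeasurable.aestronglyMeasurable (by unfold macDistortion; fun_prop))
    sθ (ae_of_all _ fun ω => ?_)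
  rw [Real.norm_eq_abs, abs_of_nonneg (macDistortion_nonneg hθ hv hn (hnonneg · ω))]
  exact macDistortion_le hθ hv hn (hnonneg · ω)

lemma integral_one_div_mul_sum_range (hident : ∀ i, IdentDistrib (g i) (g 0) μ μ)
    (hint : Integrable (g 0) μ) {M : ℕ} (hM : 0 < M) :
    ∫ ω, (1 / (M : ℝ)) * ∑ i ∈ range M, g i ω ∂μ = μ[g 0] := by
  rw [integral_const_mul, integral_finsetSum _ fun i _ => (hident i).integrable_iff.2 hint]
  simp_rw [(hident _).integral_eq]
  rw [sum_const, card_range, nsmul_eq_mul]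
  field_simp

lemma mul_integral_macDistortion_le [IsProbabilityMeasure μ]
    (hident : ∀ i, IdentDistrib (g i) (g 0) μ μ) (hnonneg : ∀ i ω, 0 ≤ g i ω)
    (hint : Integrable (g 0) μ) (hθ : 0 < sθ) (hv : 0 ≤ sv) (hn : 0 ≤ sn)
    {β : ℝ} (hβ : 0 < β) {M : ℕ} (hM : 0 < M) :
    M * ∫ ω, macDistortion sθ sv sn M (g · ω) ∂μ ≤ (sv * μ[g 0] + sn) / β ^ 2
      + sθ * (M * μ.real {ω | ∑ i ∈ range M, √(g i ω) ≤ M * β}) := by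
  have hg i : AEMeasurable (g i) μ := (hident i).aemeasurable_fst
  set B := {ω | ∑ i ∈ range M, √(g i ω) ≤ M * β}
  have hB : NullMeasurableSet B μ := nullMeasurableSet_le (by fun_prop) aemeasurable_const
  set N := fun ω => sv * ((1 / (M : ℝ)) * ∑ i ∈ range M, g i ω) + sn
  have hmean_int : Integrable (fun ω => (1 / (M : ℝ)) * ∑ i ∈ range M, g i ω) μ :=
    (integrable_finsetSum _ fun i _ => (hident i).integrable_iff.2 hint).const_mul _
  have hN_int : Integrable N μ := (hmean_int.const_mul sv).add (integrable_const sn)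
  have hN_integral : ∫ ω, N ω ∂μ = sv * μ[g 0] + sn := by
    rw [integral_add (hmean_int.const_mul sv) (integrable_const sn), integral_const_mul,
      integral_one_div_mul_sum_range hident hint hM, integral_const, probReal_univ, one_smul]
  have hpointwise ω : M * macDistortion sθ sv sn M (g · ω)
      ≤ N ω / β ^ 2 + B.indicator (fun _ => M * sθ) ω := by
    by_cases hω : ω ∈ B
    · rw [Set.indicator_of_mem hω]
      have : 0 ≤ N ω / β ^ 2 := by
        have := sum_nonneg fun i (_ : i ∈ range M) => hnonneg i ω
        positivity
      nlinarith [macDistortion_le (M := M) hθ.le hv hn (hnonneg · ω), M.cast_nonneg (α := ℝ)]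
    · rw [Set.indicator_of_notMem hω, add_zero]
      exact mul_macDistortion_le_of_le_sum_sqrt hθ hv hn (hnonneg · ω) hM hβ (not_le.1 hω).le
  calc M * ∫ ω, macDistortion sθ sv sn M (g · ω) ∂μ
      = ∫ ω, M * macDistortion sθ sv sn M (g · ω) ∂μ := (integral_const_mul _ _).symm
    _ ≤ ∫ ω, N ω / β ^ 2 + B.indicator (fun _ => M * sθ) ω ∂μ :=
        integral_mono ((integrable_macDistortion hg hnonneg hθ.le hv hn M).const_mul _)
          ((hN_int.div_const _).add ((integrable_const _).indicator₀ hB)) hpointwise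
    _ = (sv * μ[g 0] + sn) / β ^ 2 + sθ * (M * μ.real B) := by
        rw [integral_add (hN_int.div_const _) ((integrable_const _).indicator₀ hB),
          integral_div, hN_integral, integral_indicator₀ hB, setIntegral_const, smul_eq_mul]
        ring

end Distortion

end Probability

theorem mac_expected_distortion_asymptotics_general {Ω : Type*} [MeasureSpace Ω]
    (hprob : IsProbabilityMeasure (volume : Measure Ω))
    (g : ℕ → Ω → ℝ)
    (hindep : iIndepFun g volume)
    (hident : ∀ i, IdentDistrib (g i) (g 0) volume volume)
    (hnonneg : ∀ i ω, 0 ≤ g i ω)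
    (hint : Integrable (g 0) volume)
    (hpos : 0 < ∫ ω, Real.sqrt (g 0 ω))
    (sθ sv sn : ℝ) (hθ : 0 < sθ) (hv : 0 < sv) (hn : 0 < sn) :
    Tendsto (fun M : ℕ =>
        (M : ℝ) *
          ∫ ω, sθ * (sv * ((1 / (M : ℝ)) * ∑ i ∈ Finset.range M, g i ω) + sn) /
            (sv * ((1 / (M : ℝ)) * ∑ i ∈ Finset.range M, g i ω) + sn
              + sθ * ((1 / (M : ℝ)) * (∑ i ∈ Finset.range M, Real.sqrt (g i ω)) ^ 2)))
      atTop
      (nhds ((sv * (∫ ω', g 0 ω') + sn) / (∫ ω', Real.sqrt (g 0 ω')) ^ 2)) := by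
  change Tendsto (fun M : ℕ => (M : ℝ) * ∫ ω, macDistortion sθ sv sn M (g · ω)) atTop _
  have hsqrt_indep : iIndepFun (fun i ω => √(g i ω)) volume :=
    hindep.comp (fun _ => Real.sqrt) fun _ => continuous_sqrt.measurable
  have hsqrt_ident i : IdentDistrib (fun ω => √(g i ω)) (fun ω => √(g 0 ω)) volume volume :=
    (hident i).comp continuous_sqrt.measurable
  refine tendsto_order.2 ⟨fun c hc => ?_, fun c hc => ?_⟩
  · have hlim : ∀ᵐ ω, Tendsto (fun M : ℕ => M * macDistortion sθ sv sn M (g · ω)) atTop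
        (𝓝 ((sv * (∫ ω', g 0 ω') + sn) / (∫ ω', √(g 0 ω')) ^ 2)) := by
      filter_upwards [strong_law_ae_real g hint (fun i j hij => hindep.indepFun hij) hident,
        strong_law_ae_real _ hint.sqrt (fun i j hij => hsqrt_indep.indepFun hij) hsqrt_ident]
        with ω hmean hmean_sqrt
      exact tendsto_mul_macDistortion hθ.ne' hmean hmean_sqrt hpos.ne'
    simpa only [integral_const_mul] using eventually_lt_integral_of_tendsto_ae
      (fun M => ae_of_all _ fun ω => mul_nonneg M.cast_nonneg
        (macDistortion_nonneg hθ.le hv.le hn.le (hnonneg · ω)))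
      (fun M => (integrable_macDistortion (fun i => (hident i).aemeasurable_fst) hnonneg hθ.le
        hv.le hn.le M).const_mul _) hlim hc
  · obtain ⟨β, hβc, hβ, hβlt⟩ : ∃ β, (sv * (∫ ω', g 0 ω') + sn) / β ^ 2 < c ∧
        β ∈ Set.Ioo 0 (∫ ω', √(g 0 ω')) :=
      ((((continuousAt_const.div (continuousAt_id.pow 2) (pow_pos hpos 2).ne').tendsto.mono_left
        nhdsWithin_le_nhds).eventually (gt_mem_nhds hc)).and (Ioo_mem_nhdsLT hpos)).exists
    have htail := (tendsto_mul_measureReal_sum_le_sub hsqrt_indep hsqrt_ident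
      (fun i => ae_of_all _ fun ω => sqrt_nonneg _) hint.sqrt (sub_pos.2 hβlt)).const_mul sθ
    simp only [sub_sub_cancel, mul_zero] at htail
    filter_upwards [eventually_gt_atTop 0, htail.eventually (gt_mem_nhds (sub_pos.2 hβc))]
      with M hM hsmall
    linarith [mul_integral_macDistortion_le hident hnonneg hint hθ hv.le hn.le hβ hM]

/-- Asymptotics of the expected distortion of the coherent multi-access scheme
with equal amplification `α_i = 1/√M`: for i.i.d. nonnegative integrable channel
gains `g_i` with `E[√g₁] > 0`,
`M·E[D_M] → (σv²E[g₁] + σn²)/(E[√g₁])²` as `M → ∞`, where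
`D_M = σθ²(σv²(1/M)Σg_i + σn²)/(σv²(1/M)Σg_i + σn² + σθ²(1/M)(Σ√g_i)²)`;
in particular `E[D_M]` decays to zero at rate `1/M`. -/
theorem mac_expected_distortion_asymptotics {Ω : Type*} [MeasureSpace Ω]
    (hprob : IsProbabilityMeasure (volume : Measure Ω))
    (g : ℕ → Ω → ℝ) (hmeas : ∀ i, Measurable (g i))
    (hindep : iIndepFun g volume)
    (hident : ∀ i, IdentDistrib (g i) (g 0) volume volume)
    (hnonneg : ∀ i ω, 0 ≤ g i ω)
    (hint : Integrable (g 0) volume)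
    (hpos : 0 < ∫ ω, Real.sqrt (g 0 ω))
    (sθ sv sn : ℝ) (hθ : 0 < sθ) (hv : 0 < sv) (hn : 0 < sn) :
    Tendsto (fun M : ℕ =>
        (M : ℝ) *
          ∫ ω, sθ * (sv * ((1 / (M : ℝ)) * ∑ i ∈ Finset.range M, g i ω) + sn) /
            (sv * ((1 / (M : ℝ)) * ∑ i ∈ Finset.range M, g i ω) + sn
              + sθ * ((1 / (M : ℝ)) * (∑ i ∈ Finset.range M, Real.sqrt (g i ω)) ^ 2)))
      atTop
      (nhds ((sv * (∫ ω', g 0 ω') + sn) / (∫ ω', Real.sqrt (g 0 ω')) ^ 2)) :=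
  mac_expected_distortion_asymptotics_general hprob g hindep hident hnonneg hint hpos sθ sv sn hθ hv
    hn
end

section
/- Let λ > 0. Then, as the integer M → ∞ (with M ≥ 2 so that the integral converges), ∫₀^∞ x^{−1} · M(1−e^{−λx})^{M−1} λ e^{−λx} dx is asymptotically equivalent to λ/ln(M), i.e. the ratio of the two quantities tends to 1. -/
/-!
Substituting `y = λx` shows that the integral is `λ` times the same integral at rate `1`, so it
suffices to prove `L * ∫₀^∞ x⁻¹ p_M(x) dx → 1` for `L = log M`, where `p_M` is the density of the
maximum of `M` standard exponentials, with distribution function `(1 - e^{-x})^M`. This maximum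
concentrates near `L`. On `(0, L + log L]` the weight `x⁻¹` is at least `1 / (L + log L)`, and by
Bernoulli's inequality this interval carries mass at least `1 - 1/L`. On `(L - log L, ∞)` the
weight is at most `1 / (L - log L)`, while on `(0, L - log L]` the inequality `1 - e^{-x} ≤ x`
gives `x⁻¹ p_M ≤ M/(M-1) · p_{M-1}`, and `p_{M-1}` has mass `(1 - L/M)^(M-1) ≤ e^{-L/2}` there.
-/

open MeasureTheory Filter Real Set Topology

lemma one_sub_exp_neg_nonneg {x : ℝ} (hx : 0 ≤ x) : 0 ≤ 1 - exp (-x) :=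
  sub_nonneg.2 (exp_le_one_iff.2 (neg_nonpos.2 hx))

lemma one_sub_exp_neg_le_one (x : ℝ) : 1 - exp (-x) ≤ 1 :=
  sub_le_self 1 (exp_pos (-x)).le

lemma one_sub_exp_neg_le_self (x : ℝ) : 1 - exp (-x) ≤ x := by
  linarith [one_sub_le_exp_neg x]

lemma tendsto_div_add_mul_log_atTop (c : ℝ) :
    Tendsto (fun L => L / (L + c * log L)) atTop (𝓝 1) := by
  have hlog : Tendsto (fun L => log L / L) atTop (𝓝 0) := by
    simpa using tendsto_pow_log_div_mul_add_atTop 1 0 1 one_ne_zero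
  have h := ((hlog.const_mul c).const_add 1).inv₀ (by simp)
  simp only [mul_zero, add_zero, inv_one] at h
  refine h.congr' ?_
  filter_upwards [eventually_gt_atTop 0] with L hL
  field_simp

lemma tendsto_mul_exp_neg_half_atTop :
    Tendsto (fun L => L * exp (-(L / 2))) atTop (𝓝 0) := by
  have h := ((tendsto_pow_mul_exp_neg_atTop_nhds_zero 1).comp
    (tendsto_id.atTop_div_const two_pos)).const_mul 2
  simp only [mul_zero] at h
  refine h.congr fun L => ?_
  simp only [Function.comp_apply, id, pow_one]
  ring

section InvWeight

variable {f : ℝ → ℝ} {s : Set ℝ} {a b : ℝ}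

lemma inv_mul_setIntegral_le_setIntegral_inv_mul (hs : MeasurableSet s) (hsb : s ⊆ Ioc 0 b)
    (hf0 : ∀ x ∈ s, 0 ≤ f x) (hf : IntegrableOn f s)
    (hf' : IntegrableOn (fun x => x⁻¹ * f x) s) :
    b⁻¹ * ∫ x in s, f x ≤ ∫ x in s, x⁻¹ * f x := by
  rw [← integral_const_mul]
  exact setIntegral_mono_on (hf.const_mul _) hf' hs fun x hx =>
    mul_le_mul_of_nonneg_right (inv_anti₀ (hsb hx).1 (hsb hx).2) (hf0 x hx)

lemma setIntegral_inv_mul_le_inv_mul_setIntegral (hs : MeasurableSet s) (ha : 0 < a)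
    (hsa : s ⊆ Ici a) (hf0 : ∀ x ∈ s, 0 ≤ f x) (hf : IntegrableOn f s)
    (hf' : IntegrableOn (fun x => x⁻¹ * f x) s) :
    ∫ x in s, x⁻¹ * f x ≤ a⁻¹ * ∫ x in s, f x := by
  rw [← integral_const_mul]
  exact setIntegral_mono_on hf' (hf.const_mul _) hs fun x hx =>
    mul_le_mul_of_nonneg_right (inv_anti₀ ha (hsa hx)) (hf0 x hx)

end InvWeight

noncomputable def maxExpCdf (M : ℕ) (x : ℝ) : ℝ := (1 - exp (-x)) ^ M

noncomputable def maxExpPdf (M : ℕ) (x : ℝ) : ℝ := M * (1 - exp (-x)) ^ (M - 1) * exp (-x)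

section MaxExp

variable {M n : ℕ} {a b x : ℝ}

lemma hasDerivAt_maxExpCdf (M : ℕ) (x : ℝ) : HasDerivAt (maxExpCdf M) (maxExpPdf M x) x := by
  refine (((hasDerivAt_neg x).exp.const_sub 1).fun_pow M).congr_deriv ?_
  simp only [maxExpPdf]
  ring

lemma continuous_maxExpPdf (M : ℕ) : Continuous (maxExpPdf M) := by
  unfold maxExpPdf; fun_prop

lemma maxExpCdf_nonneg (M : ℕ) (hx : 0 ≤ x) : 0 ≤ maxExpCdf M x :=
  pow_nonneg (one_sub_exp_neg_nonneg hx) M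

lemma maxExpCdf_zero (hM : M ≠ 0) : maxExpCdf M 0 = 0 := by
  simp [maxExpCdf, hM]

lemma tendsto_maxExpCdf_atTop (M : ℕ) : Tendsto (maxExpCdf M) atTop (𝓝 1) := by
  unfold maxExpCdf
  simpa using (tendsto_exp_neg_atTop_nhds_zero.const_sub 1).pow M

lemma maxExpPdf_nonneg (M : ℕ) (hx : 0 ≤ x) : 0 ≤ maxExpPdf M x := by
  have := pow_nonneg (one_sub_exp_neg_nonneg hx) (M - 1)
  unfold maxExpPdf; positivity

lemma maxExpPdf_le (M : ℕ) (hx : 0 ≤ x) : maxExpPdf M x ≤ M * exp (-x) := by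
  have h := pow_le_one₀ (one_sub_exp_neg_nonneg hx) (one_sub_exp_neg_le_one x) (n := M - 1)
  calc maxExpPdf M x ≤ M * 1 * exp (-x) := by unfold maxExpPdf; gcongr
    _ = M * exp (-x) := by rw [mul_one]

lemma integrableOn_maxExpPdf (M : ℕ) : IntegrableOn (maxExpPdf M) (Ioi 0) := by
  refine ((exp_neg_integrableOn_Ioi 0 one_pos).const_mul (M : ℝ)).mono'
    (continuous_maxExpPdf M).aestronglyMeasurable.restrict ?_
  filter_upwards [ae_restrict_mem measurableSet_Ioi] with x hx
  rw [norm_of_nonneg (maxExpPdf_nonneg M hx.le)]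
  simpa using maxExpPdf_le M hx.le

lemma integral_Ioc_maxExpPdf (hM : M ≠ 0) (hb : 0 ≤ b) :
    ∫ x in Ioc 0 b, maxExpPdf M x = maxExpCdf M b := by
  rw [← intervalIntegral.integral_of_le hb, intervalIntegral.integral_eq_sub_of_hasDerivAt
    (fun x _ => hasDerivAt_maxExpCdf M x) ((continuous_maxExpPdf M).intervalIntegrable 0 b),
    maxExpCdf_zero hM, sub_zero]

lemma integral_Ioi_maxExpPdf (M : ℕ) (ha : 0 ≤ a) :
    ∫ x in Ioi a, maxExpPdf M x = 1 - maxExpCdf M a :=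
  integral_Ioi_of_hasDerivAt_of_tendsto' (fun x _ => hasDerivAt_maxExpCdf M x)
    ((integrableOn_maxExpPdf M).mono_set (Ioi_subset_Ioi ha)) (tendsto_maxExpCdf_atTop M)

lemma inv_mul_maxExpPdf_succ_le (hn : n ≠ 0) (hx : 0 < x) :
    x⁻¹ * maxExpPdf (n + 1) x ≤ (n + 1) / n * maxExpPdf n x := by
  obtain ⟨k, rfl⟩ := Nat.exists_eq_succ_of_ne_zero hn
  have hq := one_sub_exp_neg_nonneg hx.le
  have hqx : x⁻¹ * (1 - exp (-x)) ≤ 1 := by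
    rw [inv_mul_le_iff₀ hx, mul_one]; exact one_sub_exp_neg_le_self x
  have hc : (0:ℝ) ≤ (k + 2) * (1 - exp (-x)) ^ k * exp (-x) := by positivity
  calc x⁻¹ * maxExpPdf (k + 1 + 1) x
      = (k + 2) * (1 - exp (-x)) ^ k * exp (-x) * (x⁻¹ * (1 - exp (-x))) := by
        simp only [maxExpPdf]; push_cast; ring
    _ ≤ (k + 2) * (1 - exp (-x)) ^ k * exp (-x) := mul_le_of_le_one_right hc hqx
    _ = _ := by
        simp only [maxExpPdf]; push_cast; field_simp; ring

lemma inv_mul_maxExpPdf_le (hM : 2 ≤ M) (hx : 0 < x) :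
    x⁻¹ * maxExpPdf M x ≤ M * exp (-x) := by
  obtain ⟨n, rfl⟩ : ∃ n, M = n + 1 := ⟨M - 1, by omega⟩
  have hn : (n : ℝ) ≠ 0 := by norm_cast; omega
  calc x⁻¹ * maxExpPdf (n + 1) x ≤ (n + 1) / n * maxExpPdf n x :=
        inv_mul_maxExpPdf_succ_le (by omega) hx
    _ ≤ (n + 1) / n * (n * exp (-x)) := by gcongr; exact maxExpPdf_le n hx.le
    _ = ((n + 1 : ℕ) : ℝ) * exp (-x) := by field_simp; push_cast; ring

lemma integrableOn_inv_mul_maxExpPdf (hM : 2 ≤ M) :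
    IntegrableOn (fun x => x⁻¹ * maxExpPdf M x) (Ioi 0) := by
  refine ((exp_neg_integrableOn_Ioi 0 one_pos).const_mul (M : ℝ)).mono' ?_ ?_
  · exact (continuousOn_inv₀.mono fun x hx => ne_of_gt hx).mul
      (continuous_maxExpPdf M).continuousOn |>.aestronglyMeasurable measurableSet_Ioi
  · filter_upwards [ae_restrict_mem measurableSet_Ioi] with x hx
    rw [norm_of_nonneg (mul_nonneg (inv_nonneg.2 hx.le) (maxExpPdf_nonneg M hx.le))]
    simpa using inv_mul_maxExpPdf_le hM hx

lemma maxExpCdf_div_le_integral_inv_mul_maxExpPdf (hM : 2 ≤ M) (hb : 0 < b) :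
    maxExpCdf M b / b ≤ ∫ x in Ioi 0, x⁻¹ * maxExpPdf M x := by
  have hint := integrableOn_inv_mul_maxExpPdf hM
  calc maxExpCdf M b / b = b⁻¹ * ∫ x in Ioc 0 b, maxExpPdf M x := by
        rw [integral_Ioc_maxExpPdf (by omega) hb.le, div_eq_inv_mul]
    _ ≤ ∫ x in Ioc 0 b, x⁻¹ * maxExpPdf M x :=
        inv_mul_setIntegral_le_setIntegral_inv_mul measurableSet_Ioc subset_rfl
          (fun x hx => maxExpPdf_nonneg M hx.1.le)
          ((integrableOn_maxExpPdf M).mono_set Ioc_subset_Ioi_self)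
          (hint.mono_set Ioc_subset_Ioi_self)
    _ ≤ ∫ x in Ioi 0, x⁻¹ * maxExpPdf M x := by
        refine setIntegral_mono_set hint ?_ Ioc_subset_Ioi_self.eventuallyLE
        filter_upwards [ae_restrict_mem measurableSet_Ioi] with x hx
        exact mul_nonneg (inv_nonneg.2 hx.le) (maxExpPdf_nonneg M hx.le)

lemma integral_inv_mul_maxExpPdf_succ_le (hn : n ≠ 0) (ha : 0 < a) :
    ∫ x in Ioi 0, x⁻¹ * maxExpPdf (n + 1) x ≤ (n + 1) / n * maxExpCdf n a + a⁻¹ := by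
  have hint := integrableOn_inv_mul_maxExpPdf (M := n + 1) (by omega)
  have hbulk : ∫ x in Ioc 0 a, x⁻¹ * maxExpPdf (n + 1) x ≤ (n + 1) / n * maxExpCdf n a := by
    rw [← integral_Ioc_maxExpPdf hn ha.le, ← integral_const_mul]
    exact setIntegral_mono_on (hint.mono_set Ioc_subset_Ioi_self)
      (((integrableOn_maxExpPdf n).mono_set Ioc_subset_Ioi_self).const_mul _) measurableSet_Ioc
      fun x hx => inv_mul_maxExpPdf_succ_le hn hx.1
  have htail : ∫ x in Ioi a, x⁻¹ * maxExpPdf (n + 1) x ≤ a⁻¹ := by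
    refine (setIntegral_inv_mul_le_inv_mul_setIntegral measurableSet_Ioi ha Ioi_subset_Ici_self
      (fun x hx => maxExpPdf_nonneg _ (ha.trans hx).le)
      ((integrableOn_maxExpPdf _).mono_set (Ioi_subset_Ioi ha.le))
      (hint.mono_set (Ioi_subset_Ioi ha.le))).trans ?_
    rw [integral_Ioi_maxExpPdf _ ha.le]
    exact mul_le_of_le_one_right (inv_nonneg.2 ha.le)
      (sub_le_self 1 (maxExpCdf_nonneg (n + 1) ha.le))
  rw [← Ioc_union_Ioi_eq_Ioi ha.le, setIntegral_union (Ioc_disjoint_Ioi le_rfl) measurableSet_Ioi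
    (hint.mono_set Ioc_subset_Ioi_self) (hint.mono_set (Ioi_subset_Ioi ha.le))]
  exact add_le_add hbulk htail

lemma one_sub_inv_log_le_maxExpCdf (hL : 1 ≤ log M) :
    1 - (log M)⁻¹ ≤ maxExpCdf M (log M + log (log M)) := by
  have hM : (1 : ℝ) ≤ M := by
    rcases Nat.eq_zero_or_pos M with rfl | hM
    · norm_num at hL
    · exact_mod_cast hM
  have hML : 1 ≤ (M : ℝ) * log M := by nlinarith
  have hexp : exp (-(log M + log (log M))) = ((M : ℝ) * log M)⁻¹ := by
    rw [neg_add, exp_add, exp_neg, exp_neg, exp_log (by linarith), exp_log (by linarith),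
      mul_inv]
  have hbern := one_add_mul_le_pow (a := -((M : ℝ) * log M)⁻¹)
    (by linarith [inv_le_one_of_one_le₀ hML]) M
  rw [maxExpCdf, hexp]
  calc 1 - (log M)⁻¹ = 1 + M * -((M : ℝ) * log M)⁻¹ := by field_simp; ring
    _ ≤ _ := by simpa [sub_eq_add_neg] using hbern

lemma maxExpCdf_pred_le (hM : 2 ≤ M) :
    maxExpCdf (M - 1) (log M - log (log M)) ≤ exp (-(log M / 2)) := by
  have hM' : (2 : ℝ) ≤ M := by exact_mod_cast hM
  have hL : 0 < log M := log_pos (by linarith)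
  have hLM : log M ≤ M := (log_le_sub_one_of_pos (by linarith)).trans (by linarith)
  have hexp : exp (-(log M - log (log M))) = log M / M := by
    rw [neg_sub, exp_sub, exp_log hL, exp_log (by linarith)]
  have hcast : ((M - 1 : ℕ) : ℝ) = M - 1 := by push_cast [Nat.cast_sub (by omega : 1 ≤ M)]; ring
  rw [maxExpCdf, hexp]
  calc (1 - log M / M) ^ (M - 1) ≤ exp (-(log M / M)) ^ (M - 1) :=
        pow_le_pow_left₀ (by rw [sub_nonneg, div_le_one (by linarith)]; exact hLM)
          (one_sub_le_exp_neg _) _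
    _ = exp (-((M - 1) / M * log M)) := by
        rw [← exp_nat_mul, hcast]; congr 1; ring
    _ ≤ exp (-(log M / 2)) := by
        gcongr
        rw [div_mul_eq_mul_div, le_div_iff₀ (by linarith)]
        nlinarith

lemma le_log_mul_integral_inv_mul_maxExpPdf (hM : 2 ≤ M) (hL : 1 ≤ log M) :
    (1 - (log M)⁻¹) * (log M / (log M + log (log M))) ≤
      log M * ∫ x in Ioi 0, x⁻¹ * maxExpPdf M x := by
  have hb : 0 < log M + log (log M) := by linarith [log_nonneg hL]
  calc (1 - (log M)⁻¹) * (log M / (log M + log (log M)))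
      = log M * ((1 - (log M)⁻¹) / (log M + log (log M))) := by ring
    _ ≤ log M * (maxExpCdf M (log M + log (log M)) / (log M + log (log M))) := by
        gcongr; exact one_sub_inv_log_le_maxExpCdf hL
    _ ≤ log M * ∫ x in Ioi 0, x⁻¹ * maxExpPdf M x := by
        gcongr; exact maxExpCdf_div_le_integral_inv_mul_maxExpPdf hM hb

lemma log_mul_integral_inv_mul_maxExpPdf_le (hM : 2 ≤ M) :
    log M * ∫ x in Ioi 0, x⁻¹ * maxExpPdf M x ≤
      2 * log M * exp (-(log M / 2)) + log M / (log M - log (log M)) := by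
  obtain ⟨n, rfl⟩ : ∃ n, M = n + 1 := ⟨M - 1, by omega⟩
  have hn : (1 : ℝ) ≤ n := by exact_mod_cast (by omega : 1 ≤ n)
  set L := log ((n + 1 : ℕ) : ℝ)
  have hL : 0 < L := log_pos (by push_cast; linarith)
  have ha : 0 < L - log L := by linarith [log_le_sub_one_of_pos hL]
  have hcdf : maxExpCdf n (L - log L) ≤ exp (-(L / 2)) := maxExpCdf_pred_le hM
  have hcoef : ((n : ℝ) + 1) / n ≤ 2 := by rw [div_le_iff₀ (by linarith)]; linarith
  calc L * ∫ x in Ioi 0, x⁻¹ * maxExpPdf (n + 1) x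
      ≤ L * ((n + 1) / n * maxExpCdf n (L - log L) + (L - log L)⁻¹) := by
        gcongr; exact integral_inv_mul_maxExpPdf_succ_le (by omega) ha
    _ ≤ L * (2 * exp (-(L / 2)) + (L - log L)⁻¹) := by
        gcongr
        exact maxExpCdf_nonneg n ha.le
    _ = 2 * L * exp (-(L / 2)) + L / (L - log L) := by ring

theorem tendsto_log_mul_integral_inv_mul_maxExpPdf :
    Tendsto (fun M : ℕ => log M * ∫ x in Ioi 0, x⁻¹ * maxExpPdf M x) atTop (𝓝 1) := by
  have hlog : Tendsto (fun M : ℕ => log M) atTop atTop :=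
    tendsto_log_atTop.comp tendsto_natCast_atTop_atTop
  have hlower : Tendsto (fun L => (1 - L⁻¹) * (L / (L + log L))) atTop (𝓝 1) := by
    simpa using (tendsto_inv_atTop_zero.const_sub 1).mul (tendsto_div_add_mul_log_atTop 1)
  have hupper : Tendsto (fun L => 2 * L * exp (-(L / 2)) + L / (L - log L)) atTop (𝓝 1) := by
    have h := (tendsto_mul_exp_neg_half_atTop.const_mul 2).add (tendsto_div_add_mul_log_atTop (-1))
    simp only [mul_zero, zero_add, neg_one_mul, ← sub_eq_add_neg, ← mul_assoc] at h
    exact h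
  refine tendsto_of_tendsto_of_tendsto_of_le_of_le' (hlower.comp hlog) (hupper.comp hlog) ?_ ?_
  · filter_upwards [eventually_ge_atTop 2, hlog.eventually_ge_atTop 1] with M hM hL
    exact le_log_mul_integral_inv_mul_maxExpPdf hM hL
  · filter_upwards [eventually_ge_atTop 2] with M hM
    exact log_mul_integral_inv_mul_maxExpPdf_le hM

end MaxExp

lemma integral_inv_mul_rescaled_maxExpPdf {lam : ℝ} (hlam : 0 < lam) (M : ℕ) :
    ∫ x in Ioi 0, x⁻¹ * (lam * maxExpPdf M (lam * x)) =
      lam * ∫ x in Ioi 0, x⁻¹ * maxExpPdf M x := by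
  have h := integral_comp_mul_left_Ioi (fun y => y⁻¹ * maxExpPdf M y) 0 hlam
  rw [mul_zero, smul_eq_mul] at h
  have hlam' := hlam.ne'
  calc ∫ x in Ioi 0, x⁻¹ * (lam * maxExpPdf M (lam * x))
      = ∫ x in Ioi 0, lam ^ 2 * ((lam * x)⁻¹ * maxExpPdf M (lam * x)) := by
        congr 1 with x; rw [mul_inv]; field_simp
    _ = lam * ∫ x in Ioi 0, x⁻¹ * maxExpPdf M x := by
        rw [integral_const_mul, h]; field_simp

/-- `E[g_max^{-1}] ~ λ/ln M` as `M → ∞`, where `g_max` is the maximum of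
`M` i.i.d. exponential(λ) random variables, with density
`p_M(x) = M(1-e^{-λx})^{M-1} λe^{-λx}` (the integral is finite for `M ≥ 2`). -/
theorem gmax_inv_asymptotics (lam : ℝ) (hlam : 0 < lam) :
    Tendsto (fun M : ℕ =>
        (∫ x in Set.Ioi (0:ℝ),
            (1 / x) * ((M : ℝ) * (1 - Real.exp (-lam * x)) ^ (M - 1)
              * (lam * Real.exp (-lam * x)))) /
          (lam / Real.log M)) atTop (nhds 1) := by
  refine tendsto_log_mul_integral_inv_mul_maxExpPdf.congr fun M => ?_
  have hdensity : ∀ x : ℝ, (1 / x) * ((M : ℝ) * (1 - exp (-lam * x)) ^ (M - 1)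
      * (lam * exp (-lam * x))) = x⁻¹ * (lam * maxExpPdf M (lam * x)) := fun x => by
    simp only [maxExpPdf, neg_mul, one_div]; ring
  simp only [hdensity, integral_inv_mul_rescaled_maxExpPdf hlam, div_div_eq_mul_div]
  field_simp
end

section
/- Let λ > 0 and b > 0. Suppose that for each integer M ≥ 1 the number ν_M > 0 satisfies ∫_{b²ν_M}^∞ (1/√(x·ν_M) − b/x) · M(1−e^{−λx})^{M−1} λ e^{−λx} dx = 1. Then ν_M is asymptotically equivalent to λ/ln(M) as M → ∞, i.e. ν_M · ln(M)/λ → 1. -/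
/-!
Write `X_M = ν_M ln M / λ` and `F_M(x) = (1 - e^{-λx})^M`. Then
`F_M(θ ln M / λ) = (1 - M^{-θ})^M` tends to `1` for `θ > 1` and to `0`, even after
multiplication by `ln M`, for `θ < 1`: the maximum concentrates at `ln M / λ`.
On its support the amplification `1/√(xν) - b/x` is nonnegative and at most `1/√(xν)`.
Restricting the constraint integral to `(ln M / (2λ), θ ln M / λ]` with `θ > 1` gives
`1 ≥ (1 - o(1)) / √(θ X_M)`, so `lim inf X_M ≥ 1/θ`. For `θ < 1`, bounding the integrand by
`1/(bν_M)` below `θ ln M / λ` and by `1/√(θ X_M)` above gives `1 ≤ o(1) + 1/√(θ X_M)`, the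
`o(1)` because `1/ν_M = O(ln M)` by the lower bound; so `lim sup X_M ≤ 1/θ`.
-/

open MeasureTheory Filter Real Set Topology

theorem one_sub_rpow_neg_mem_Icc {x θ : ℝ} (hx : 1 ≤ x) (hθ : 0 ≤ θ) :
    1 - x ^ (-θ) ∈ Icc (0 : ℝ) 1 :=
  ⟨sub_nonneg.2 (rpow_le_one_of_one_le_of_nonpos hx (neg_nonpos.2 hθ)),
    sub_le_self _ (rpow_nonneg (by linarith) _)⟩

theorem natCast_mul_rpow_neg {M : ℕ} (hM : 1 ≤ M) (θ : ℝ) :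
    (M : ℝ) * (M : ℝ) ^ (-θ) = (M : ℝ) ^ (1 - θ) := by
  rw [sub_eq_neg_add, rpow_add_one (by positivity), mul_comm]

theorem tendsto_one_sub_rpow_neg_pow_of_one_lt {θ : ℝ} (hθ : 1 < θ) :
    Tendsto (fun M : ℕ => (1 - (M : ℝ) ^ (-θ)) ^ M) atTop (𝓝 1) := by
  have hsmall : Tendsto (fun M : ℕ => (M : ℝ) ^ (1 - θ)) atTop (𝓝 0) := by
    have := (tendsto_rpow_neg_atTop (sub_pos.2 hθ)).comp tendsto_natCast_atTop_atTop
    simpa [Function.comp_def] using this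
  refine tendsto_of_tendsto_of_tendsto_of_le_of_le' (by simpa using hsmall.const_sub 1)
    tendsto_const_nhds ?_ ?_
  all_goals filter_upwards [eventually_ge_atTop 1] with M hM
  all_goals have hu := one_sub_rpow_neg_mem_Icc (θ := θ) (Nat.one_le_cast.2 hM) (by linarith)
  · rw [← natCast_mul_rpow_neg hM]
    have := one_add_mul_le_pow (a := -(M : ℝ) ^ (-θ)) (by linarith [hu.2, hu.1]) M
    simpa [← sub_eq_add_neg] using this
  · exact pow_le_one₀ hu.1 hu.2

theorem tendsto_log_mul_one_sub_rpow_neg_pow_of_lt_one {θ : ℝ} (hθ₀ : 0 < θ) (hθ₁ : θ < 1) :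
    Tendsto (fun M : ℕ => log M * (1 - (M : ℝ) ^ (-θ)) ^ M) atTop (𝓝 0) := by
  have hlog : Tendsto (fun x : ℝ => log x * x ^ (-(1 - θ))) atTop (𝓝 0) := by
    refine ((isLittleO_log_rpow_atTop (sub_pos.2 hθ₁)).tendsto_div_nhds_zero).congr' ?_
    filter_upwards [eventually_gt_atTop 0] with x hx
    rw [rpow_neg hx.le, div_eq_mul_inv]
  refine tendsto_of_tendsto_of_tendsto_of_le_of_le' tendsto_const_nhds
    (hlog.comp tendsto_natCast_atTop_atTop) ?_ ?_
  all_goals filter_upwards [eventually_ge_atTop 1] with M hM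
  all_goals have hu := one_sub_rpow_neg_mem_Icc (θ := θ) (Nat.one_le_cast.2 hM) hθ₀.le
  all_goals have hlogM : 0 ≤ log M := log_natCast_nonneg M
  · exact mul_nonneg hlogM (pow_nonneg hu.1 M)
  · refine mul_le_mul_of_nonneg_left ?_ hlogM
    have hMu : 0 < (M : ℝ) ^ (1 - θ) := by positivity
    calc (1 - (M : ℝ) ^ (-θ)) ^ M ≤ exp (-(M : ℝ) ^ (-θ)) ^ M :=
          pow_le_pow_left₀ hu.1 (one_sub_le_exp_neg _) M
      _ = exp (-(M : ℝ) ^ (1 - θ)) := by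
          rw [← exp_nat_mul, ← natCast_mul_rpow_neg hM]; ring_nf
      _ ≤ ((M : ℝ) ^ (1 - θ))⁻¹ := by
          rw [exp_neg]
          exact inv_anti₀ hMu (by linarith [add_one_le_exp ((M : ℝ) ^ (1 - θ))])
      _ = (M : ℝ) ^ (-(1 - θ)) := (rpow_neg (by positivity) _).symm

theorem setIntegral_mul_le_const_mul {α : Type*} [MeasurableSpace α] {μ : Measure α}
    {f g : α → ℝ} {s : Set α} {K : ℝ} (hs : MeasurableSet s) (hfg : IntegrableOn (f * g) s μ)
    (hg : IntegrableOn g s μ) (hg0 : ∀ x ∈ s, 0 ≤ g x) (hfK : ∀ x ∈ s, f x ≤ K) :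
    ∫ x in s, f x * g x ∂μ ≤ K * ∫ x in s, g x ∂μ := by
  rw [← integral_const_mul]
  exact setIntegral_mono_on hfg (hg.const_mul K) hs
    fun x hx => mul_le_mul_of_nonneg_right (hfK x hx) (hg0 x hx)

theorem const_mul_setIntegral_le_mul {α : Type*} [MeasurableSpace α] {μ : Measure α}
    {f g : α → ℝ} {s : Set α} {K : ℝ} (hs : MeasurableSet s) (hfg : IntegrableOn (f * g) s μ)
    (hg : IntegrableOn g s μ) (hg0 : ∀ x ∈ s, 0 ≤ g x) (hKf : ∀ x ∈ s, K ≤ f x) :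
    K * ∫ x in s, g x ∂μ ≤ ∫ x in s, f x * g x ∂μ := by
  rw [← integral_const_mul]
  exact setIntegral_mono_on (hg.const_mul K) hfg hs
    fun x hx => mul_le_mul_of_nonneg_right (hKf x hx) (hg0 x hx)

theorem one_le_sq_mul_of_one_div_sqrt_le {r y : ℝ} (hy : 0 < y) (h : 1 / √y ≤ r) :
    1 ≤ r ^ 2 * y := by
  have h1 : 1 ≤ r * √y := (div_le_iff₀ (sqrt_pos.2 hy)).1 h
  nlinarith [sq_sqrt hy.le]

theorem sq_mul_le_one_of_le_one_div_sqrt {c y : ℝ} (hc : 0 ≤ c) (hy : 0 < y)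
    (h : c ≤ 1 / √y) : c ^ 2 * y ≤ 1 := by
  have h1 : c * √y ≤ 1 := (le_div_iff₀ (sqrt_pos.2 hy)).1 h
  calc c ^ 2 * y = (c * √y) ^ 2 := by rw [mul_pow, sq_sqrt hy.le]
    _ ≤ 1 := pow_le_one₀ (by positivity) h1

namespace ExpMax

noncomputable def cdf (lam : ℝ) (M : ℕ) (x : ℝ) : ℝ := (1 - exp (-lam * x)) ^ M

noncomputable def pdf (lam : ℝ) (M : ℕ) (x : ℝ) : ℝ :=
  M * (1 - exp (-lam * x)) ^ (M - 1) * (lam * exp (-lam * x))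

variable {lam θ x : ℝ} {M : ℕ}

theorem hasDerivAt_cdf (lam : ℝ) (M : ℕ) (x : ℝ) : HasDerivAt (cdf lam M) (pdf lam M x) x := by
  have h : HasDerivAt (fun x => 1 - exp (-lam * x)) (lam * exp (-lam * x)) x := by
    simpa [mul_comm] using (((hasDerivAt_id x).const_mul (-lam)).exp).const_sub 1
  exact (h.fun_pow M).congr_deriv (by rw [pdf, mul_assoc])

theorem one_sub_exp_nonneg (hlam : 0 ≤ lam) (hx : 0 ≤ x) : 0 ≤ 1 - exp (-lam * x) := by
  have : exp (-lam * x) ≤ 1 := exp_le_one_iff.2 (by nlinarith)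
  linarith

theorem cdf_nonneg (hlam : 0 ≤ lam) (hx : 0 ≤ x) : 0 ≤ cdf lam M x :=
  pow_nonneg (one_sub_exp_nonneg hlam hx) M

theorem cdf_le_one (hlam : 0 ≤ lam) (hx : 0 ≤ x) : cdf lam M x ≤ 1 :=
  pow_le_one₀ (one_sub_exp_nonneg hlam hx) (by linarith [exp_pos (-lam * x)])

theorem pdf_nonneg (hlam : 0 ≤ lam) (hx : 0 ≤ x) : 0 ≤ pdf lam M x := by
  have := one_sub_exp_nonneg hlam hx
  unfold pdf
  positivity

theorem tendsto_cdf_atTop (hlam : 0 < lam) (M : ℕ) : Tendsto (cdf lam M) atTop (𝓝 1) := by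
  unfold cdf
  have h : Tendsto (fun x => exp (-lam * x)) atTop (𝓝 0) :=
    tendsto_exp_atBot.comp (tendsto_id.const_mul_atTop_of_neg (neg_neg_of_pos hlam))
  simpa using (h.const_sub 1).pow M

theorem integrableOn_pdf_Ioi (hlam : 0 < lam) (M : ℕ) {a : ℝ} (ha : 0 ≤ a) :
    IntegrableOn (pdf lam M) (Ioi a) :=
  integrableOn_Ioi_deriv_of_nonneg' (fun x _ => hasDerivAt_cdf lam M x)
    (fun _ hx => pdf_nonneg hlam.le (ha.trans (le_of_lt hx))) (tendsto_cdf_atTop hlam M)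

theorem integral_pdf_Ioi (hlam : 0 < lam) (M : ℕ) {a : ℝ} (ha : 0 ≤ a) :
    ∫ x in Ioi a, pdf lam M x = 1 - cdf lam M a :=
  integral_Ioi_of_hasDerivAt_of_nonneg' (fun x _ => hasDerivAt_cdf lam M x)
    (fun _ hx => pdf_nonneg hlam.le (ha.trans (le_of_lt hx))) (tendsto_cdf_atTop hlam M)

theorem integral_pdf_Ioc (lam : ℝ) (M : ℕ) {a A : ℝ} (h : a ≤ A) :
    ∫ x in Ioc a A, pdf lam M x = cdf lam M A - cdf lam M a := by
  rw [← intervalIntegral.integral_of_le h]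
  exact intervalIntegral.integral_eq_sub_of_hasDerivAt (fun x _ => hasDerivAt_cdf lam M x)
    ((by unfold pdf; fun_prop : Continuous (pdf lam M)).intervalIntegrable a A)

theorem cdf_mul_log_div (hlam : lam ≠ 0) (θ : ℝ) (hM : 0 < M) :
    cdf lam M (θ * log M / lam) = (1 - (M : ℝ) ^ (-θ)) ^ M := by
  rw [cdf, rpow_def_of_pos (by exact_mod_cast hM)]
  congr 3
  field_simp

theorem tendsto_cdf_mul_log_div_of_one_lt (hlam : lam ≠ 0) (hθ : 1 < θ) :
    Tendsto (fun M : ℕ => cdf lam M (θ * log M / lam)) atTop (𝓝 1) := by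
  refine (tendsto_one_sub_rpow_neg_pow_of_one_lt hθ).congr' ?_
  filter_upwards [eventually_gt_atTop 0] with M hM
  exact (cdf_mul_log_div hlam θ hM).symm

theorem tendsto_log_mul_cdf_mul_log_div_of_lt_one (hlam : lam ≠ 0) (hθ₀ : 0 < θ) (hθ₁ : θ < 1) :
    Tendsto (fun M : ℕ => log M * cdf lam M (θ * log M / lam)) atTop (𝓝 0) := by
  refine (tendsto_log_mul_one_sub_rpow_neg_pow_of_lt_one hθ₀ hθ₁).congr' ?_
  filter_upwards [eventually_gt_atTop 0] with M hM
  rw [cdf_mul_log_div hlam θ hM]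

theorem tendsto_cdf_mul_log_div_of_lt_one (hlam : lam ≠ 0) (hθ₀ : 0 < θ) (hθ₁ : θ < 1) :
    Tendsto (fun M : ℕ => cdf lam M (θ * log M / lam)) atTop (𝓝 0) := by
  refine ((tendsto_log_mul_cdf_mul_log_div_of_lt_one hlam hθ₀ hθ₁).div_atTop
    (tendsto_log_atTop.comp tendsto_natCast_atTop_atTop)).congr' ?_
  filter_upwards [eventually_ge_atTop 2] with M hM
  have : log M ≠ 0 := (log_pos (by exact_mod_cast hM)).ne'
  simp only [Function.comp_apply]
  field_simp

end ExpMax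

/-- The optimal squared amplification `α*(x)` on its support `x ≥ b²ν`. -/
noncomputable def waterFillingAmp (b ν x : ℝ) : ℝ := 1 / √(x * ν) - b / x

section WaterFilling

variable {b ν x : ℝ}

theorem waterFillingAmp_nonneg (hb : 0 ≤ b) (hν : 0 < ν) (hx : b ^ 2 * ν < x) :
    0 ≤ waterFillingAmp b ν x := by
  have hx0 : 0 < x := lt_of_le_of_lt (by positivity) hx
  have hsqrt : b * √(x * ν) ≤ x := by
    calc b * √(x * ν) = √(b ^ 2 * (x * ν)) := by rw [sqrt_mul (sq_nonneg b), sqrt_sq hb]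
    _ ≤ √(x * x) := sqrt_le_sqrt (by nlinarith)
    _ = x := sqrt_mul_self hx0.le
  rw [waterFillingAmp, sub_nonneg, div_le_div_iff₀ hx0 (by positivity)]
  linarith

theorem waterFillingAmp_le (hb : 0 ≤ b) (hx : 0 ≤ x) : waterFillingAmp b ν x ≤ 1 / √(x * ν) :=
  sub_le_self _ (div_nonneg hb hx)

theorem one_div_sqrt_le_one_div_sqrt (hν : 0 < ν) {a : ℝ} (ha : 0 < a) (hax : a ≤ x) :
    1 / √(x * ν) ≤ 1 / √(a * ν) :=
  one_div_le_one_div_of_le (sqrt_pos.2 (by positivity))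
    (sqrt_le_sqrt (mul_le_mul_of_nonneg_right hax hν.le))

theorem one_div_sqrt_le_one_div_mul (hb : 0 < b) (hν : 0 < ν) (hx : b ^ 2 * ν ≤ x) :
    1 / √(x * ν) ≤ 1 / (b * ν) := by
  have h := one_div_sqrt_le_one_div_sqrt hν (by positivity) hx
  rwa [show b ^ 2 * ν * ν = (b * ν) ^ 2 by ring, sqrt_sq (by positivity)] at h

end WaterFilling

open ExpMax

/-- The average power constraint, with equality, for the water-filling allocation with
multiplier `ν` for the maximum of `M` exponential channel gains of rate `lam`. -/
def IsLagrangeMultiplier (lam b : ℝ) (M : ℕ) (ν : ℝ) : Prop :=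
  ∫ x in Ioi (b ^ 2 * ν), waterFillingAmp b ν x * pdf lam M x = 1

namespace IsLagrangeMultiplier

variable {lam b ν : ℝ} {M : ℕ}

theorem integrableOn (h : IsLagrangeMultiplier lam b M ν) :
    IntegrableOn (fun x => waterFillingAmp b ν x * pdf lam M x) (Ioi (b ^ 2 * ν)) := by
  by_contra hint
  have h' : (0 : ℝ) = 1 := (integral_undef hint).symm.trans h
  norm_num at h'

theorem one_le_cdf_div_add (h : IsLagrangeMultiplier lam b M ν) (hlam : 0 < lam) (hb : 0 < b)
    (hν : 0 < ν) {a : ℝ} (ha : b ^ 2 * ν ≤ a) :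
    1 ≤ cdf lam M a / (b * ν) + 1 / √(a * ν) := by
  have hs : 0 ≤ b ^ 2 * ν := by positivity
  have ha0 : 0 < a := lt_of_lt_of_le (by positivity) ha
  have hsplit := Ioc_union_Ioi_eq_Ioi ha
  have hpdf : ∀ x ∈ Ioi (b ^ 2 * ν), 0 ≤ pdf lam M x :=
    fun x hx => pdf_nonneg hlam.le (hs.trans hx.out.le)
  have hnear : ∫ x in Ioc (b ^ 2 * ν) a, waterFillingAmp b ν x * pdf lam M x
      ≤ 1 / (b * ν) * (cdf lam M a - cdf lam M (b ^ 2 * ν)) := by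
    rw [← integral_pdf_Ioc lam M ha]
    refine setIntegral_mul_le_const_mul measurableSet_Ioc
      (h.integrableOn.mono_set (hsplit ▸ subset_union_left))
      ((integrableOn_pdf_Ioi hlam M hs).mono_set Ioc_subset_Ioi_self)
      (fun x hx => hpdf x hx.1) fun x hx => ?_
    exact (waterFillingAmp_le hb.le (hs.trans hx.1.le)).trans
      (one_div_sqrt_le_one_div_mul hb hν hx.1.le)
  have hfar : ∫ x in Ioi a, waterFillingAmp b ν x * pdf lam M x
      ≤ 1 / √(a * ν) * (1 - cdf lam M a) := by
    rw [← integral_pdf_Ioi hlam M ha0.le]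
    refine setIntegral_mul_le_const_mul measurableSet_Ioi
      (h.integrableOn.mono_set (hsplit ▸ subset_union_right))
      (integrableOn_pdf_Ioi hlam M ha0.le)
      (fun x hx => hpdf x (lt_of_le_of_lt ha hx)) fun x hx => ?_
    exact (waterFillingAmp_le hb.le (ha0.trans hx).le).trans
      (one_div_sqrt_le_one_div_sqrt hν ha0 hx.out.le)
  have hsum := setIntegral_union (Ioc_disjoint_Ioi le_rfl) measurableSet_Ioi
    (h.integrableOn.mono_set (hsplit ▸ subset_union_left))
    (h.integrableOn.mono_set (hsplit ▸ subset_union_right))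
  rw [hsplit, h] at hsum
  refine hsum.le.trans ((add_le_add hnear hfar).trans (add_le_add ?_ ?_))
  · rw [one_div_mul_eq_div]
    exact div_le_div_of_nonneg_right (sub_le_self _ (cdf_nonneg hlam.le hs)) (by positivity)
  · exact mul_le_of_le_one_right (by positivity) (sub_le_self _ (cdf_nonneg hlam.le ha0.le))

theorem mul_le_two (h : IsLagrangeMultiplier lam b M ν) (hlam : 0 < lam) (hb : 0 < b)
    (hν : 0 < ν) : b * ν ≤ 2 := by
  have h1 := h.one_le_cdf_div_add hlam hb hν le_rfl
  rw [show b ^ 2 * ν * ν = (b * ν) ^ 2 by ring, sqrt_sq (by positivity),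
    ← add_div] at h1
  have := cdf_le_one (M := M) hlam.le (show 0 ≤ b ^ 2 * ν by positivity)
  rw [le_div_iff₀ (by positivity)] at h1
  linarith

theorem one_le_sq_mul (h : IsLagrangeMultiplier lam b M ν) (hlam : 0 < lam) (hb : 0 < b)
    (hν : 0 < ν) {a A : ℝ} (ha : b ^ 2 * ν < a) (haA : a ≤ A)
    (hQ : cdf lam M a < cdf lam M A) :
    1 ≤ ((cdf lam M A - cdf lam M a)⁻¹ + b / a) ^ 2 * (A * ν) := by
  have ha0 : 0 < a := lt_of_le_of_lt (by positivity) ha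
  have hsub : Ioc a A ⊆ Ioi (b ^ 2 * ν) := fun x hx => ha.trans hx.1
  have hmid : (1 / √(A * ν) - b / a) * (cdf lam M A - cdf lam M a)
      ≤ ∫ x in Ioc a A, waterFillingAmp b ν x * pdf lam M x := by
    rw [← integral_pdf_Ioc lam M haA]
    refine const_mul_setIntegral_le_mul measurableSet_Ioc (h.integrableOn.mono_set hsub)
      ((integrableOn_pdf_Ioi hlam M ha0.le).mono_set Ioc_subset_Ioi_self)
      (fun x hx => pdf_nonneg hlam.le (ha0.trans hx.1).le) fun x hx => ?_
    have hx0 : 0 < x := ha0.trans hx.1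
    have := one_div_sqrt_le_one_div_sqrt hν hx0 hx.2
    have : b / x ≤ b / a := div_le_div_of_nonneg_left hb.le ha0 hx.1.le
    rw [waterFillingAmp]
    linarith
  have hle : ∫ x in Ioc a A, waterFillingAmp b ν x * pdf lam M x ≤ 1 :=
    h ▸ setIntegral_mono_set h.integrableOn
      ((ae_restrict_iff' measurableSet_Ioi).2 (ae_of_all _ fun x hx =>
        mul_nonneg (waterFillingAmp_nonneg hb.le hν hx)
          (pdf_nonneg hlam.le ((by positivity : (0 : ℝ) ≤ b ^ 2 * ν).trans hx.out.le))))
      hsub.eventuallyLE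
  have hQ0 : 0 < cdf lam M A - cdf lam M a := sub_pos.2 hQ
  refine one_le_sq_mul_of_one_div_sqrt_le (mul_pos (ha0.trans_le haA) hν) ?_
  have : 1 / √(A * ν) - b / a ≤ (cdf lam M A - cdf lam M a)⁻¹ := by
    rw [← one_div, le_div_iff₀ hQ0]
    linarith
  linarith

end IsLagrangeMultiplier

section Asymptotics

variable {lam b : ℝ} {ν : ℕ → ℝ}

theorem tendsto_mul_log_div_atTop (hlam : 0 < lam) {θ : ℝ} (hθ : 0 < θ) :
    Tendsto (fun M : ℕ => θ * log M / lam) atTop atTop :=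
  ((tendsto_log_atTop.comp tendsto_natCast_atTop_atTop).const_mul_atTop hθ).atTop_div_const hlam

theorem eventually_lt_mul_log_div (hlam : 0 < lam) (hb : 0 < b) (hν : ∀ M, 1 ≤ M → 0 < ν M)
    (hmult : ∀ M, 1 ≤ M → IsLagrangeMultiplier lam b M (ν M)) {t : ℝ} (ht : t < 1) :
    ∀ᶠ M : ℕ in atTop, t < ν M * log M / lam := by
  obtain ⟨u, htu, hu1⟩ := exists_between (max_lt ht one_pos)
  have hu0 : 0 < u := (le_max_right t 0).trans_lt htu
  have hθ : 1 < u⁻¹ := one_lt_inv₀ hu0 |>.2 hu1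
  set A : ℕ → ℝ := fun M => u⁻¹ * log M / lam
  set a : ℕ → ℝ := fun M => 2⁻¹ * log M / lam
  set R : ℕ → ℝ := fun M => (cdf lam M (A M) - cdf lam M (a M))⁻¹ + b / a M
  have hQ : Tendsto (fun M => cdf lam M (A M) - cdf lam M (a M)) atTop (𝓝 1) := by
    simpa using (tendsto_cdf_mul_log_div_of_one_lt hlam.ne' hθ).sub
      (tendsto_cdf_mul_log_div_of_lt_one hlam.ne' (by norm_num : (0 : ℝ) < 2⁻¹) (by norm_num))
  have ha : Tendsto a atTop atTop := tendsto_mul_log_div_atTop hlam (by norm_num)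
  have hR : Tendsto R atTop (𝓝 1) := by
    simpa using (hQ.inv₀ one_ne_zero).add (tendsto_const_nhds.div_atTop ha)
  have hbound : Tendsto (fun M => (u⁻¹ * R M ^ 2)⁻¹) atTop (𝓝 u) := by
    simpa using ((hR.pow 2).const_mul u⁻¹).inv₀ (by simp [hu0.ne'])
  filter_upwards [hbound.eventually_const_lt (max_lt_iff.1 htu).1, hQ.eventually_const_lt one_pos,
    ha.eventually_gt_atTop (2 * b), eventually_ge_atTop 2] with M hlt hQ0 hab hM
  have hM1 : 1 ≤ M := by omega
  have hνM := hν M hM1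
  have hlog : 0 < log M := log_pos (by exact_mod_cast hM)
  have hsa : b ^ 2 * ν M < a M := by
    nlinarith [(hmult M hM1).mul_le_two hlam hb hνM]
  have haA : a M ≤ A M := by
    simp only [a, A]
    gcongr
    linarith
  have key := (hmult M hM1).one_le_sq_mul hlam hb hνM hsa haA (sub_pos.1 hQ0)
  refine hlt.trans_le ((inv_le_iff_one_le_mul₀ (by positivity)).2 ?_)
  calc (1 : ℝ) ≤ R M ^ 2 * (A M * ν M) := key
    _ = ν M * log M / lam * (u⁻¹ * R M ^ 2) := by simp only [A]; ring

theorem eventually_mul_log_div_lt (hlam : 0 < lam) (hb : 0 < b) (hν : ∀ M, 1 ≤ M → 0 < ν M)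
    (hmult : ∀ M, 1 ≤ M → IsLagrangeMultiplier lam b M (ν M)) {c : ℝ} (hc : 1 < c) :
    ∀ᶠ M : ℕ in atTop, ν M * log M / lam < c := by
  obtain ⟨u, h1u, huc⟩ := exists_between hc
  have hu0 : 0 < u := one_pos.trans h1u
  have hθ₀ : 0 < u⁻¹ := inv_pos.2 hu0
  have hθ₁ : u⁻¹ < 1 := inv_lt_one_of_one_lt₀ h1u
  set a : ℕ → ℝ := fun M => u⁻¹ * log M / lam
  -- `ν M > lam / (2 log M)` eventually, so `cdf (a M) / (b ν M) ≤ D M`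
  set D : ℕ → ℝ := fun M => 2 / (b * lam) * (log M * cdf lam M (a M))
  have hD : Tendsto D atTop (𝓝 0) := by
    simpa using (tendsto_log_mul_cdf_mul_log_div_of_lt_one hlam.ne' hθ₀ hθ₁).const_mul
      (2 / (b * lam))
  have hbound : Tendsto (fun M => (u⁻¹ * (1 - D M) ^ 2)⁻¹) atTop (𝓝 u) := by
    simpa using (((hD.const_sub 1).pow 2).const_mul u⁻¹).inv₀ (by simp [hu0.ne'])
  filter_upwards [hbound.eventually_lt_const huc, hD.eventually_lt_const one_pos,
    eventually_lt_mul_log_div hlam hb hν hmult (by norm_num : (2⁻¹ : ℝ) < 1),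
    (tendsto_mul_log_div_atTop hlam hθ₀).eventually_gt_atTop (2 * b), eventually_ge_atTop 2]
    with M hlt hD1 hhalf hab hM
  have hM1 : 1 ≤ M := by omega
  have hνM := hν M hM1
  have hlog : 0 < log M := log_pos (by exact_mod_cast hM)
  have hsa : b ^ 2 * ν M ≤ a M := by
    nlinarith [(hmult M hM1).mul_le_two hlam hb hνM]
  have key := (hmult M hM1).one_le_cdf_div_add hlam hb hνM hsa
  have hcdfD : cdf lam M (a M) / (b * ν M) ≤ D M := by
    have hcdf := cdf_nonneg (M := M) hlam.le (by positivity : 0 ≤ a M)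
    rw [div_le_iff₀ (by positivity)]
    simp only [D]
    rw [lt_div_iff₀ hlam] at hhalf
    field_simp
    nlinarith [mul_nonneg hcdf hb.le]
  have h1D : 0 < 1 - D M := sub_pos.2 hD1
  have hsq := sq_mul_le_one_of_le_one_div_sqrt h1D.le (by positivity)
    (show 1 - D M ≤ 1 / √(a M * ν M) by linarith)
  refine lt_of_le_of_lt ?_ hlt
  rw [← one_div, le_div_iff₀ (by positivity)]
  calc ν M * log M / lam * (u⁻¹ * (1 - D M) ^ 2) = (1 - D M) ^ 2 * (a M * ν M) := by
        simp only [a]; ring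
    _ ≤ 1 := hsq

end Asymptotics

/-- For the multi-sensor diversity scheme under optimal water-filling power
allocation with unit average power, the Lagrange multiplier `ν_M` defined by
`∫_{b²ν_M}^∞ (1/√(xν_M) − b/x) M(1-e^{-λx})^{M-1} λe^{-λx} dx = 1`
satisfies `ν_M ~ λ/ln M` as `M → ∞`, i.e. `ν_M ln(M)/λ → 1`. -/
theorem diversity_lagrange_asymptotics (lam b : ℝ) (hlam : 0 < lam) (hb : 0 < b)
    (ν : ℕ → ℝ) (hν : ∀ M : ℕ, 1 ≤ M → 0 < ν M)
    (hpower : ∀ M : ℕ, 1 ≤ M →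
      (∫ x in Set.Ioi (b ^ 2 * ν M),
          (1 / Real.sqrt (x * ν M) - b / x) *
            ((M : ℝ) * (1 - Real.exp (-lam * x)) ^ (M - 1)
              * (lam * Real.exp (-lam * x)))) = 1) :
    Tendsto (fun M : ℕ => ν M * Real.log M / lam) atTop (nhds 1) :=
  tendsto_order.2 ⟨fun _ ht => eventually_lt_mul_log_div hlam hb hν hpower ht,
    fun _ hc => eventually_mul_log_div_lt hlam hb hν hpower hc⟩
end
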